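/- arXiv:1511.01240 — 5 statements merged into one kernel-verified Lean document; each statement's English description precedes it below -/
import Mathlib

section
/- Let {F_u : u ∈ V} and {G_u : u ∈ V} be graph-directed self-similar sets in ℝ^n generated over the same directed graph (V, E) by similitudes {f_e} and {g_e} respectively, where for each edge e the maps f_e and g_e have the same contraction ratio ρ_e ∈ (0,1). If both families satisfy the strong separation condition (the unions F_u = ⋃_{v} ⋃_{e ∈ E_{u,v}} f_e(F_v) and likewise for G are disjoint unions), then for each u ∈ V, F_u is Lipschitz equivalent to G_u. -/
def LipschitzEquiv {X Y : Type*} [MetricSpace X] [MetricSpace Y]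
    (A : Set X) (B : Set Y) : Prop :=
  ∃ φ : X → Y, Set.BijOn φ A B ∧ ∃ c : ℝ, 0 < c ∧
    ∀ x ∈ A, ∀ y ∈ A, c⁻¹ * dist x y ≤ dist (φ x) (φ y) ∧ dist (φ x) (φ y) ≤ c * dist x y

open Filter Topology Set

/-- Approximating sequence of maps for the graph-directed coding construction. -/
noncomputable def gdApprox {V E X : Type*} (sel : V → X → E) (pre : V → X → X)
    (tgt : E → V) (g : E → X → X) (y0 : V → X) : ℕ → V → X → X
  | 0 => fun u _ => y0 u
  | (k+1) => fun u x => g (sel u x) (gdApprox sel pre tgt g y0 k (tgt (sel u x)) (pre u x))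

lemma gdApprox_zero {V E X : Type*} (sel : V → X → E) (pre : V → X → X)
    (tgt : E → V) (g : E → X → X) (y0 : V → X) (u : V) (x : X) :
    gdApprox sel pre tgt g y0 0 u x = y0 u := rfl

lemma gdApprox_succ {V E X : Type*} (sel : V → X → E) (pre : V → X → X)
    (tgt : E → V) (g : E → X → X) (y0 : V → X) (k : ℕ) (u : V) (x : X) :
    gdApprox sel pre tgt g y0 (k+1) u x
      = g (sel u x) (gdApprox sel pre tgt g y0 k (tgt (sel u x)) (pre u x)) := rfl

/-- Two disjoint compact sets are at positive distance. -/
lemma gdSep {X : Type*} [MetricSpace X] {s t : Set X} (hs : IsCompact s) (ht : IsCompact t)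
    (hd : Disjoint s t) : ∃ δ : ℝ, 0 < δ ∧ ∀ x ∈ s, ∀ y ∈ t, δ ≤ dist x y := by
  obtain ⟨r, hr, h⟩ := EMetric.exists_pos_forall_lt_edist hs ht.isClosed hd
  refine ⟨r, hr, fun x hx y hy => ?_⟩
  have h' := h x hx y hy
  rw [edist_dist, ← ENNReal.ofReal_coe_nnreal,
    ENNReal.ofReal_lt_ofReal_iff_of_nonneg r.coe_nonneg] at h'
  exact h'.le

/-- One-sided construction: a Lipschitz map conjugating the two graph-directed systems,
mapping each `F u` into `G u`. -/
lemma gdOneSide {X V E : Type*} [MetricSpace X] [CompleteSpace X]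
    [Fintype V] [Fintype E] [Nonempty V] [Nonempty E]
    (src tgt : E → V) (ρ : E → ℝ) (hρ : ∀ e, 0 < ρ e ∧ ρ e < 1)
    (f g : E → X → X)
    (hf : ∀ e x y, dist (f e x) (f e y) = ρ e * dist x y)
    (hg : ∀ e x y, dist (g e x) (g e y) = ρ e * dist x y)
    (F G : V → Set X)
    (hFc : ∀ u, IsCompact (F u))
    (hGne : ∀ u, (G u).Nonempty) (hGc : ∀ u, IsCompact (G u))
    (hFeq : ∀ u, F u = ⋃ e ∈ {e : E | src e = u}, f e '' F (tgt e))
    (hGsub : ∀ e, g e '' G (tgt e) ⊆ G (src e))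
    (hFsep : ∀ e₁ e₂ : E, src e₁ = src e₂ → e₁ ≠ e₂ →
      Disjoint (f e₁ '' F (tgt e₁)) (f e₂ '' F (tgt e₂))) :
    ∃ (φ : V → X → X) (C : ℝ), 1 ≤ C ∧
      (∀ u, Set.MapsTo (φ u) (F u) (G u)) ∧
      (∀ e, ∀ z ∈ F (tgt e), φ (src e) (f e z) = g e (φ (tgt e) z)) ∧
      (∀ u, ∀ x ∈ F u, ∀ y ∈ F u, dist (φ u x) (φ u y) ≤ C * dist x y) := by
  classical
  -- basic constants
  set r : ℝ := Finset.univ.sup' Finset.univ_nonempty ρ with hrdef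
  have hρr : ∀ e, ρ e ≤ r := fun e => Finset.le_sup' ρ (Finset.mem_univ e)
  have hr0 : 0 ≤ r := le_trans (hρ (Classical.arbitrary E)).1.le (hρr _)
  have hr1 : r < 1 := by
    rw [hrdef, Finset.sup'_lt_iff]
    exact fun e _ => (hρ e).2
  set D' : ℝ := Finset.univ.sup' Finset.univ_nonempty (fun v => Metric.diam (G v)) with hD'def
  have hGdiam : ∀ v, ∀ a ∈ G v, ∀ b ∈ G v, dist a b ≤ D' := by
    intro v a ha b hb
    exact le_trans (Metric.dist_le_diam_of_mem (hGc v).isBounded ha hb)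
      (Finset.le_sup' (fun v => Metric.diam (G v)) (Finset.mem_univ v))
  have hD'0 : 0 ≤ D' :=
    le_trans Metric.diam_nonneg (Finset.le_sup' (fun v => Metric.diam (G v))
      (Finset.mem_univ (Classical.arbitrary V)))
  -- continuity of the maps
  have hfcont : ∀ e, Continuous (f e) := by
    intro e
    refine (LipschitzWith.of_dist_le_mul (K := ⟨ρ e, (hρ e).1.le⟩) ?_).continuous
    intro x y; simp only [NNReal.coe_mk, hf e x y]; exact le_rfl
  have hgcont : ∀ e, Continuous (g e) := by
    intro e
    refine (LipschitzWith.of_dist_le_mul (K := ⟨ρ e, (hρ e).1.le⟩) ?_).continuous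
    intro x y; simp only [NNReal.coe_mk, hg e x y]; exact le_rfl
  have hinj : ∀ e (a b : X), f e a = f e b → a = b := by
    intro e a b hab
    have h0 : (0 : ℝ) = ρ e * dist a b := by rw [← hf e a b, hab, dist_self]
    have : dist a b = 0 := by
      rcases mul_eq_zero.mp h0.symm with h | h
      · exact absurd h (hρ e).1.ne'
      · exact h
    exact dist_eq_zero.mp this
  -- the separation constant
  have hsep' : ∀ p : E × E, ∃ d : ℝ, 0 < d ∧ (src p.1 = src p.2 → p.1 ≠ p.2 →
      ∀ x ∈ f p.1 '' F (tgt p.1), ∀ y ∈ f p.2 '' F (tgt p.2), d ≤ dist x y) := by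
    intro p
    by_cases hc : src p.1 = src p.2 ∧ p.1 ≠ p.2
    · obtain ⟨δ, hδ0, hδ⟩ := gdSep ((hFc (tgt p.1)).image (hfcont p.1))
        ((hFc (tgt p.2)).image (hfcont p.2)) (hFsep p.1 p.2 hc.1 hc.2)
      exact ⟨δ, hδ0, fun _ _ => hδ⟩
    · exact ⟨1, one_pos, fun h1 h2 => absurd ⟨h1, h2⟩ hc⟩
  choose d hd0 hdle using hsep'
  set δ : ℝ := Finset.univ.inf' Finset.univ_nonempty d with hδdef
  have hδ0 : 0 < δ := by
    rw [hδdef, Finset.lt_inf'_iff]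
    exact fun p _ => hd0 p
  have hδle : ∀ e₁ e₂, src e₁ = src e₂ → e₁ ≠ e₂ →
      ∀ x ∈ f e₁ '' F (tgt e₁), ∀ y ∈ f e₂ '' F (tgt e₂), δ ≤ dist x y := by
    intro e₁ e₂ h1 h2 x hx y hy
    exact le_trans (Finset.inf'_le d (Finset.mem_univ (e₁, e₂))) (hdle (e₁, e₂) h1 h2 x hx y hy)
  set C : ℝ := max 1 (D' / δ) with hCdef
  have hC1 : 1 ≤ C := le_max_left _ _
  have hC0 : 0 ≤ C := le_trans zero_le_one hC1
  have hCδ : D' ≤ C * δ := by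
    have : D' / δ ≤ C := le_max_right _ _
    calc D' = (D' / δ) * δ := by field_simp
    _ ≤ C * δ := mul_le_mul_of_nonneg_right this hδ0.le
  -- base points and the selection functions
  choose y0 hy0 using hGne
  have hselex : ∀ (u : V) (x : X), ∃ p : E × X,
      x ∈ F u → src p.1 = u ∧ p.2 ∈ F (tgt p.1) ∧ f p.1 p.2 = x := by
    intro u x
    by_cases hx : x ∈ F u
    · rw [hFeq u] at hx
      simp only [Set.mem_iUnion, Set.mem_image, Set.mem_setOf_eq] at hx
      obtain ⟨e, he, z, hz, hfz⟩ := hx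
      exact ⟨(e, z), fun _ => ⟨he, hz, hfz⟩⟩
    · exact ⟨(Classical.arbitrary E, x), fun h => absurd h hx⟩
  choose p hp using hselex
  set sel : V → X → E := fun u x => (p u x).1 with hseldef
  set pre : V → X → X := fun u x => (p u x).2 with hpredef
  have hpsel : ∀ (u : V) (x : X), x ∈ F u →
      src (sel u x) = u ∧ pre u x ∈ F (tgt (sel u x)) ∧ f (sel u x) (pre u x) = x :=
    fun u x hx => hp u x hx
  -- uniqueness of the selection on decomposed points
  have hmemF : ∀ e, ∀ z ∈ F (tgt e), f e z ∈ F (src e) := by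
    intro e z hz
    rw [hFeq (src e)]
    exact Set.mem_biUnion (by simp) ⟨z, hz, rfl⟩
  have hseluniq : ∀ e, ∀ z ∈ F (tgt e),
      sel (src e) (f e z) = e ∧ pre (src e) (f e z) = z := by
    intro e z hz
    obtain ⟨h1, h2, h3⟩ := hpsel (src e) (f e z) (hmemF e z hz)
    have hee : sel (src e) (f e z) = e := by
      by_contra hne
      exact (Set.disjoint_left.mp (hFsep _ e h1 hne)) ⟨pre (src e) (f e z), h2, h3⟩ ⟨z, hz, rfl⟩
    refine ⟨hee, ?_⟩
    have h3' := h3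
    rw [hee] at h3'
    exact hinj e _ _ h3'
  -- the approximating sequence
  set A : ℕ → V → X → X := gdApprox sel pre tgt g y0 with hAdef
  have hA0 : ∀ u x, A 0 u x = y0 u := fun u x => rfl
  have hAS : ∀ k u x, A (k+1) u x = g (sel u x) (A k (tgt (sel u x)) (pre u x)) :=
    fun k u x => rfl
  have hmem : ∀ k u, ∀ x ∈ F u, A k u x ∈ G u := by
    intro k
    induction k with
    | zero => intro u x _; rw [hA0]; exact hy0 u
    | succ k ih =>
      intro u x hx
      obtain ⟨h1, h2, _⟩ := hpsel u x hx
      rw [hAS]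
      have : g (sel u x) (A k (tgt (sel u x)) (pre u x)) ∈ G (src (sel u x)) :=
        hGsub (sel u x) ⟨A k (tgt (sel u x)) (pre u x), ih _ _ h2, rfl⟩
      rwa [h1] at this
  have hconjk : ∀ k e, ∀ z ∈ F (tgt e), A (k+1) (src e) (f e z) = g e (A k (tgt e) z) := by
    intro k e z hz
    obtain ⟨hs, hpz⟩ := hseluniq e z hz
    rw [hAS, hs, hpz]
  -- Cauchy estimate
  have hsucc : ∀ k u, ∀ x ∈ F u, dist (A k u x) (A (k+1) u x) ≤ D' * r ^ k := by
    intro k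
    induction k with
    | zero =>
      intro u x hx
      rw [pow_zero, mul_one, hA0]
      exact hGdiam u _ (hy0 u) _ (hmem 1 u x hx)
    | succ k ih =>
      intro u x hx
      obtain ⟨h1, h2, _⟩ := hpsel u x hx
      rw [hAS k, hAS (k+1), hg]
      calc ρ (sel u x) * dist (A k (tgt (sel u x)) (pre u x)) (A (k+1) (tgt (sel u x)) (pre u x))
          ≤ r * (D' * r ^ k) := by
            apply mul_le_mul (hρr _) (ih _ _ h2) dist_nonneg hr0
        _ = D' * r ^ (k+1) := by ring
  -- Lipschitz estimate at finite level
  have hlip : ∀ k u, ∀ x ∈ F u, ∀ y ∈ F u,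
      dist (A k u x) (A k u y) ≤ C * dist x y + D' * r ^ k := by
    intro k
    induction k with
    | zero =>
      intro u x _ y _
      rw [hA0, hA0, dist_self, pow_zero, mul_one]
      positivity
    | succ k ih =>
      intro u x hx y hy
      obtain ⟨h1x, h2x, h3x⟩ := hpsel u x hx
      obtain ⟨h1y, h2y, h3y⟩ := hpsel u y hy
      by_cases hsxy : sel u x = sel u y
      · rw [hAS, hAS, ← hsxy, hg]
        have hdxy : dist x y = ρ (sel u x) * dist (pre u x) (pre u y) := by
          conv_lhs => rw [← h3x, ← h3y, ← hsxy, hf]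
        rw [← hsxy] at h2y
        calc ρ (sel u x) * dist (A k (tgt (sel u x)) (pre u x)) (A k (tgt (sel u x)) (pre u y))
            ≤ ρ (sel u x) * (C * dist (pre u x) (pre u y) + D' * r ^ k) :=
              mul_le_mul_of_nonneg_left (ih _ _ h2x _ h2y) (hρ _).1.le
          _ = C * (ρ (sel u x) * dist (pre u x) (pre u y)) + ρ (sel u x) * (D' * r ^ k) := by
              ring
          _ ≤ C * dist x y + D' * r ^ (k+1) := by
              rw [← hdxy]
              have : ρ (sel u x) * (D' * r ^ k) ≤ r * (D' * r ^ k) :=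
                mul_le_mul_of_nonneg_right (hρr _) (by positivity)
              have h2 : r * (D' * r ^ k) = D' * r ^ (k+1) := by ring
              linarith [this, h2 ▸ this]
      · have hd1 : dist (A (k+1) u x) (A (k+1) u y) ≤ D' :=
          hGdiam u _ (hmem (k+1) u x hx) _ (hmem (k+1) u y hy)
        have hd2 : δ ≤ dist x y :=
          hδle (sel u x) (sel u y) (h1x.trans h1y.symm) hsxy x
            ⟨pre u x, h2x, h3x⟩ y ⟨pre u y, h2y, h3y⟩
        have : D' ≤ C * dist x y :=
          le_trans hCδ (mul_le_mul_of_nonneg_left hd2 hC0)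
        have hpow : 0 ≤ D' * r ^ (k+1) := by positivity
        linarith
  -- the limit map
  have hconv : ∀ (u : V) (x : X), ∃ y : X,
      x ∈ F u → Tendsto (fun k => A k u x) atTop (𝓝 y) := by
    intro u x
    by_cases hx : x ∈ F u
    · have hc : CauchySeq (fun k => A k u x) :=
        cauchySeq_of_le_geometric r D' hr1 (fun k => hsucc k u x hx)
      obtain ⟨y, hy⟩ := cauchySeq_tendsto_of_complete hc
      exact ⟨y, fun _ => hy⟩
    · exact ⟨y0 u, fun h => absurd h hx⟩
  choose φ hφ using hconv
  refine ⟨φ, C, hC1, ?_, ?_, ?_⟩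
  · -- MapsTo
    intro u x hx
    exact (hGc u).isClosed.mem_of_tendsto (hφ u x hx)
      (Filter.Eventually.of_forall (fun k => hmem k u x hx))
  · -- conjugacy
    intro e z hz
    have ht1 : Tendsto (fun k => A (k+1) (src e) (f e z)) atTop (𝓝 (φ (src e) (f e z))) :=
      (hφ (src e) (f e z) (hmemF e z hz)).comp (tendsto_add_atTop_nat 1)
    have ht2 : Tendsto (fun k => g e (A k (tgt e) z)) atTop (𝓝 (g e (φ (tgt e) z))) :=
      ((hgcont e).continuousAt).tendsto.comp (hφ (tgt e) z hz)
    have heq : (fun k => A (k+1) (src e) (f e z)) = fun k => g e (A k (tgt e) z) :=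
      funext (fun k => hconjk k e z hz)
    rw [heq] at ht1
    exact tendsto_nhds_unique ht1 ht2
  · -- Lipschitz
    intro u x hx y hy
    have ht1 : Tendsto (fun k => dist (A k u x) (A k u y)) atTop
        (𝓝 (dist (φ u x) (φ u y))) := (hφ u x hx).dist (hφ u y hy)
    have ht2 : Tendsto (fun k => C * dist x y + D' * r ^ k) atTop (𝓝 (C * dist x y)) := by
      have : Tendsto (fun k : ℕ => D' * r ^ k) atTop (𝓝 (D' * 0)) :=
        (tendsto_pow_atTop_nhds_zero_of_lt_one hr0 hr1).const_mul D'
      simpa using tendsto_const_nhds.add this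
    exact le_of_tendsto_of_tendsto' ht1 ht2 (fun k => hlip k u x hx y hy)

theorem graph_directed_lipschitzEquiv
    {n : ℕ} {V E : Type*} [Fintype V] [Fintype E]
    (src tgt : E → V) (hout : ∀ v : V, ∃ e : E, src e = v)
    (ρ : E → ℝ) (hρ : ∀ e, 0 < ρ e ∧ ρ e < 1)
    (f g : E → EuclideanSpace ℝ (Fin n) → EuclideanSpace ℝ (Fin n))
    (hf : ∀ e x y, dist (f e x) (f e y) = ρ e * dist x y)
    (hg : ∀ e x y, dist (g e x) (g e y) = ρ e * dist x y)
    (F G : V → Set (EuclideanSpace ℝ (Fin n)))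
    (hFne : ∀ u, (F u).Nonempty) (hFc : ∀ u, IsCompact (F u))
    (hGne : ∀ u, (G u).Nonempty) (hGc : ∀ u, IsCompact (G u))
    (hFeq : ∀ u, F u = ⋃ e ∈ {e : E | src e = u}, f e '' F (tgt e))
    (hGeq : ∀ u, G u = ⋃ e ∈ {e : E | src e = u}, g e '' G (tgt e))
    (hFsep : ∀ e₁ e₂ : E, src e₁ = src e₂ → e₁ ≠ e₂ →
      Disjoint (f e₁ '' F (tgt e₁)) (f e₂ '' F (tgt e₂)))
    (hGsep : ∀ e₁ e₂ : E, src e₁ = src e₂ → e₁ ≠ e₂ →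
      Disjoint (g e₁ '' G (tgt e₁)) (g e₂ '' G (tgt e₂))) :
    ∀ u : V, LipschitzEquiv (F u) (G u) := by
  classical
  intro u0
  haveI : Nonempty V := ⟨u0⟩
  haveI : Nonempty E := ⟨(hout u0).choose⟩
  have hGsub : ∀ e, g e '' G (tgt e) ⊆ G (src e) := by
    intro e
    rw [hGeq (src e)]
    exact fun x hx => Set.mem_biUnion rfl hx
  have hFsub : ∀ e, f e '' F (tgt e) ⊆ F (src e) := by
    intro e
    rw [hFeq (src e)]
    exact fun x hx => Set.mem_biUnion rfl hx
  obtain ⟨φ, C, hC1, hφmaps, hφconj, hφlip⟩ :=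
    gdOneSide src tgt ρ hρ f g hf hg F G hFc hGne hGc hFeq hGsub hFsep
  obtain ⟨ψ, C', hC'1, hψmaps, hψconj, hψlip⟩ :=
    gdOneSide src tgt ρ hρ g f hg hf G F hGc hFne hFc hGeq hFsub hGsep
  -- constants for the identity estimate
  set r : ℝ := Finset.univ.sup' Finset.univ_nonempty ρ with hrdef
  have hρr : ∀ e, ρ e ≤ r := fun e => Finset.le_sup' ρ (Finset.mem_univ e)
  have hr0 : 0 ≤ r := le_trans (hρ (Classical.arbitrary E)).1.le (hρr _)
  have hr1 : r < 1 := by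
    rw [hrdef, Finset.sup'_lt_iff]
    exact fun e _ => (hρ e).2
  set D : ℝ := Finset.univ.sup' Finset.univ_nonempty (fun v => Metric.diam (F v)) with hDdef
  have hFdiam : ∀ v, ∀ a ∈ F v, ∀ b ∈ F v, dist a b ≤ D := by
    intro v a ha b hb
    exact le_trans (Metric.dist_le_diam_of_mem (hFc v).isBounded ha hb)
      (Finset.le_sup' (fun v => Metric.diam (F v)) (Finset.mem_univ v))
  set D' : ℝ := Finset.univ.sup' Finset.univ_nonempty (fun v => Metric.diam (G v)) with hD'def
  have hGdiam : ∀ v, ∀ a ∈ G v, ∀ b ∈ G v, dist a b ≤ D' := by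
    intro v a ha b hb
    exact le_trans (Metric.dist_le_diam_of_mem (hGc v).isBounded ha hb)
      (Finset.le_sup' (fun v => Metric.diam (G v)) (Finset.mem_univ v))
  -- ψ ∘ φ = id on F u
  have hidF : ∀ (k : ℕ) (u : V), ∀ x ∈ F u, dist (ψ u (φ u x)) x ≤ D * r ^ k := by
    intro k
    induction k with
    | zero =>
      intro u x hx
      rw [pow_zero, mul_one]
      exact hFdiam u _ (hψmaps u (hφmaps u hx)) x hx
    | succ k ih =>
      intro u x hx
      rw [hFeq u] at hx
      simp only [Set.mem_iUnion, Set.mem_image, Set.mem_setOf_eq] at hx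
      obtain ⟨e, he, z, hz, rfl⟩ := hx
      subst he
      rw [hφconj e z hz, hψconj e _ (hφmaps _ hz), hf]
      calc ρ e * dist (ψ (tgt e) (φ (tgt e) z)) z
          ≤ r * (D * r ^ k) := mul_le_mul (hρr e) (ih _ z hz) dist_nonneg hr0
        _ = D * r ^ (k+1) := by ring
  have hidG : ∀ (k : ℕ) (u : V), ∀ y ∈ G u, dist (φ u (ψ u y)) y ≤ D' * r ^ k := by
    intro k
    induction k with
    | zero =>
      intro u y hy
      rw [pow_zero, mul_one]
      exact hGdiam u _ (hφmaps u (hψmaps u hy)) y hy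
    | succ k ih =>
      intro u y hy
      rw [hGeq u] at hy
      simp only [Set.mem_iUnion, Set.mem_image, Set.mem_setOf_eq] at hy
      obtain ⟨e, he, w, hw, rfl⟩ := hy
      subst he
      rw [hψconj e w hw, hφconj e _ (hψmaps _ hw), hg]
      calc ρ e * dist (φ (tgt e) (ψ (tgt e) w)) w
          ≤ r * (D' * r ^ k) := mul_le_mul (hρr e) (ih _ w hw) dist_nonneg hr0
        _ = D' * r ^ (k+1) := by ring
  have hψφ : ∀ (u : V), ∀ x ∈ F u, ψ u (φ u x) = x := by
    intro u x hx
    have ht : Filter.Tendsto (fun k : ℕ => D * r ^ k) Filter.atTop (nhds (D * 0)) :=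
      (tendsto_pow_atTop_nhds_zero_of_lt_one hr0 hr1).const_mul D
    have hle : dist (ψ u (φ u x)) x ≤ 0 := by
      have := le_of_tendsto_of_tendsto' (tendsto_const_nhds
        (x := dist (ψ u (φ u x)) x) (f := Filter.atTop (α := ℕ))) ht
        (fun k => hidF k u x hx)
      simpa using this
    exact dist_le_zero.mp hle
  have hφψ : ∀ (u : V), ∀ y ∈ G u, φ u (ψ u y) = y := by
    intro u y hy
    have ht : Filter.Tendsto (fun k : ℕ => D' * r ^ k) Filter.atTop (nhds (D' * 0)) :=
      (tendsto_pow_atTop_nhds_zero_of_lt_one hr0 hr1).const_mul D'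
    have hle : dist (φ u (ψ u y)) y ≤ 0 := by
      have := le_of_tendsto_of_tendsto' (tendsto_const_nhds
        (x := dist (φ u (ψ u y)) y) (f := Filter.atTop (α := ℕ))) ht
        (fun k => hidG k u y hy)
      simpa using this
    exact dist_le_zero.mp hle
  -- assemble the Lipschitz equivalence
  refine ⟨φ u0, ⟨hφmaps u0, ?_, ?_⟩, max C C', lt_of_lt_of_le one_pos (le_trans hC1 (le_max_left _ _)), ?_⟩
  · -- InjOn
    intro x hx y hy hxy
    have := congrArg (ψ u0) hxy
    rwa [hψφ u0 x hx, hψφ u0 y hy] at this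
  · -- SurjOn
    intro y hy
    exact ⟨ψ u0 y, hψmaps u0 hy, hφψ u0 y hy⟩
  · intro x hx y hy
    have hc : (0:ℝ) < max C C' := lt_of_lt_of_le one_pos (le_trans hC1 (le_max_left _ _))
    constructor
    · have h1 : dist x y ≤ C' * dist (φ u0 x) (φ u0 y) := by
        have := hψlip u0 _ (hφmaps u0 hx) _ (hφmaps u0 hy)
        rwa [hψφ u0 x hx, hψφ u0 y hy] at this
      rw [inv_mul_le_iff₀ hc]
      calc dist x y ≤ C' * dist (φ u0 x) (φ u0 y) := h1
        _ ≤ max C C' * dist (φ u0 x) (φ u0 y) :=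
          mul_le_mul_of_nonneg_right (le_max_right _ _) dist_nonneg
    · calc dist (φ u0 x) (φ u0 y) ≤ C * dist x y := hφlip u0 x hx y hy
        _ ≤ max C C' * dist x y := mul_le_mul_of_nonneg_right (le_max_left _ _) dist_nonneg
end

section
/- Let 0 < λ < 1/5 and consider the two IFSs on ℝ with ratio λ and translations a = (0, λ(1−λ), 2λ(1−λ), 3λ, 1−λ) and b = (0, λ(1−λ), 2λ, 3λ−λ², 1−λ). Then the attractors K_a and K_b are Lipschitz equivalent. -/
/-!
Both attractors are graph-directed sets for one and the same two-state graph with ratio `λ`.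
The states are `K` itself and the block `B = K ∪ (K + γ₁) ∪ (K + γ₂) ∪ (K + γ₃)`, chosen so that
`λB` is the union of the first four pieces; thus `K = λB ∪ (λK + 1 - λ)`. Splitting each
translate of `K` in `B` the same way produces eight pieces, two of which (`λK + 1 - λ`,
and `λK + 2(1 - λ)` resp. `λK + 3 - λ`) lie inside other pieces: the overlaps of the IFS are
exact. What remains, `B` as a union of six pieces, has gaps of at least `min λ (1 - 5λ)`.

Two graph-directed systems with the same graph and ratio which both satisfy such a separation
condition are Lipschitz equivalent: send a point to the point of the other attractor with the
same address. Distinct cells of depth `n` are `λⁿ`-separated and have diameter `O(λⁿ)`, so the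
first depth at which the addresses of two points differ pins down the distance of both the
points and their images up to a constant factor.
-/

open Set Filter Topology

lemma exists_forall_dist_le_of_isCompact {ι Z : Type*} [PseudoMetricSpace Z] [Finite ι]
    {E : ι → Set Z} (hc : ∀ i, IsCompact (E i)) :
    ∃ D, ∀ i, ∀ x ∈ E i, ∀ y ∈ E i, dist x y ≤ D := by
  obtain ⟨D, hD⟩ := Metric.isBounded_iff.1 (isCompact_iUnion hc).isBounded
  exact ⟨D, fun i x hx y hy => hD (mem_iUnion_of_mem i hx) (mem_iUnion_of_mem i hy)⟩

namespace CellTree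

variable {T X Y : Type*}

def IsBranch (ch : T → Set T) (c₀ : T) (p : ℕ → T) : Prop :=
  p 0 = c₀ ∧ ∀ n, p (n + 1) ∈ ch (p n)

def SharesBranch (ch : T → Set T) (c₀ : T) (A : T → Set X) (B : T → Set Y) (x : X) (y : Y) :
    Prop :=
  ∃ p, IsBranch ch c₀ p ∧ ∀ n, x ∈ A (p n) ∧ y ∈ B (p n)

variable {ch : T → Set T} {ρ : T → ℝ} {r δ : ℝ} {c₀ : T} {p p' : ℕ → T}

lemma sharesBranch_comm {A : T → Set X} {B : T → Set Y} {x : X} {y : Y} :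
    SharesBranch ch c₀ A B x y ↔ SharesBranch ch c₀ B A y x := by
  simp only [SharesBranch, and_comm (a := x ∈ _)]

lemma IsBranch.eq_or_exists_split (hp : IsBranch ch c₀ p) (hp' : IsBranch ch c₀ p') :
    p = p' ∨ ∃ n, p n = p' n ∧ p (n + 1) ≠ p' (n + 1) := by
  by_contra! h
  obtain ⟨hne, hstep⟩ := h
  exact hne (funext fun n => Nat.rec (hp.1.trans hp'.1.symm) (fun n ih => hstep n ih) n)

lemma IsBranch.le_pow_mul (hr : 0 ≤ r) (hρ : ∀ c, ∀ c' ∈ ch c, ρ c' ≤ r * ρ c)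
    (hp : IsBranch ch c₀ p) (n : ℕ) : ρ (p n) ≤ r ^ n * ρ c₀ := by
  induction n with
  | zero => simp [hp.1]
  | succ n ih =>
    calc ρ (p (n + 1)) ≤ r * ρ (p n) := hρ _ _ (hp.2 n)
      _ ≤ r * (r ^ n * ρ c₀) := mul_le_mul_of_nonneg_left ih hr
      _ = r ^ (n + 1) * ρ c₀ := by ring

lemma exists_isBranch_forall_mem {A : T → Set X} (hA : ∀ c, A c = ⋃ c' ∈ ch c, A c') {x : X}
    (hx : x ∈ A c₀) : ∃ p, IsBranch ch c₀ p ∧ ∀ n, x ∈ A (p n) := by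
  have step (c : {c // x ∈ A c}) : ∃ c' : {c // x ∈ A c}, c'.1 ∈ ch c.1 := by
    obtain ⟨c, hc⟩ := c
    rw [hA c, mem_iUnion₂] at hc
    obtain ⟨c', hc', hxc'⟩ := hc
    exact ⟨⟨c', hxc'⟩, hc'⟩
  choose next hnext using step
  refine ⟨fun n => (next^[n] ⟨c₀, hx⟩).1, ⟨rfl, fun n => ?_⟩, fun n => (next^[n] ⟨c₀, hx⟩).2⟩
  simp only [Function.iterate_succ_apply']
  exact hnext _

variable [MetricSpace X] [MetricSpace Y]

structure IsSeparatedFamily (ch : T → Set T) (ρ : T → ℝ) (δ : ℝ) (A : T → Set X) : Prop where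
  isCompact : ∀ c, IsCompact (A c)
  nonempty : ∀ c, (A c).Nonempty
  eq_biUnion : ∀ c, A c = ⋃ c' ∈ ch c, A c'
  dist_le : ∀ c, ∀ x ∈ A c, ∀ y ∈ A c, dist x y ≤ ρ c
  le_dist : ∀ c, ∀ c₁ ∈ ch c, ∀ c₂ ∈ ch c, c₁ ≠ c₂ → ∀ x ∈ A c₁, ∀ y ∈ A c₂, δ * ρ c ≤ dist x y

namespace IsSeparatedFamily

variable {A : T → Set X} {B : T → Set Y}

lemma nonempty_iInter (hA : IsSeparatedFamily ch ρ δ A) (hp : IsBranch ch c₀ p) :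
    (⋂ n, A (p n)).Nonempty :=
  IsCompact.nonempty_iInter_of_sequence_nonempty_isCompact_isClosed _
    (fun n => (hA.eq_biUnion (p n)).symm ▸ subset_biUnion_of_mem (u := A) (hp.2 n))
    (fun _ => hA.nonempty _) (hA.isCompact _) (fun _ => (hA.isCompact _).isClosed)

lemma exists_sharesBranch (hA : IsSeparatedFamily ch ρ δ A) (hB : IsSeparatedFamily ch ρ δ B)
    {x : X} (hx : x ∈ A c₀) : ∃ y, SharesBranch ch c₀ A B x y := by
  obtain ⟨p, hp, hxp⟩ := exists_isBranch_forall_mem hA.eq_biUnion hx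
  obtain ⟨y, hy⟩ := hB.nonempty_iInter hp
  exact ⟨y, p, hp, fun n => ⟨hxp n, mem_iInter.1 hy n⟩⟩

lemma eq_of_forall_mem (hA : IsSeparatedFamily ch ρ δ A) (hr0 : 0 ≤ r) (hr1 : r < 1)
    (hρ : ∀ c, ∀ c' ∈ ch c, ρ c' ≤ r * ρ c) (hp : IsBranch ch c₀ p) {x y : X}
    (hx : ∀ n, x ∈ A (p n)) (hy : ∀ n, y ∈ A (p n)) : x = y := by
  have hlim : Tendsto (fun n => r ^ n * ρ c₀) atTop (𝓝 0) := by
    simpa using (tendsto_pow_atTop_nhds_zero_of_lt_one hr0 hr1).mul_const (ρ c₀)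
  refine dist_le_zero.1 (ge_of_tendsto' hlim fun n => ?_)
  exact (hA.dist_le _ x (hx n) y (hy n)).trans (hp.le_pow_mul hr0 hρ n)

lemma mul_dist_le_dist (hA : IsSeparatedFamily ch ρ δ A) (hB : IsSeparatedFamily ch ρ δ B)
    (hδ : 0 ≤ δ) (hr0 : 0 ≤ r) (hr1 : r < 1) (hρ : ∀ c, ∀ c' ∈ ch c, ρ c' ≤ r * ρ c)
    {x x' : X} {y y' : Y} (h : SharesBranch ch c₀ A B x y) (h' : SharesBranch ch c₀ A B x' y') :
    δ * dist y y' ≤ dist x x' := by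
  obtain ⟨p, hp, hxy⟩ := h
  obtain ⟨p', hp', hxy'⟩ := h'
  rcases hp.eq_or_exists_split hp' with rfl | ⟨n, hn, hsplit⟩
  · rw [hB.eq_of_forall_mem hr0 hr1 hρ hp (fun n => (hxy n).2) (fun n => (hxy' n).2)]
    simp
  · calc δ * dist y y' ≤ δ * ρ (p n) :=
          mul_le_mul_of_nonneg_left (hB.dist_le _ _ (hxy n).2 _ (hn ▸ (hxy' n).2)) hδ
      _ ≤ dist x x' :=
          hA.le_dist _ _ (hp.2 n) _ (hn ▸ hp'.2 n) hsplit _ (hxy _).1 _ (hxy' _).1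

end IsSeparatedFamily

open IsSeparatedFamily in
theorem lipschitzEquiv {A : T → Set X} {B : T → Set Y} (hA : IsSeparatedFamily ch ρ δ A)
    (hB : IsSeparatedFamily ch ρ δ B) (hδ : 0 < δ) (hr0 : 0 ≤ r) (hr1 : r < 1)
    (hρ : ∀ c, ∀ c' ∈ ch c, ρ c' ≤ r * ρ c) (c₀ : T) : LipschitzEquiv (A c₀) (B c₀) := by
  have hφ (x : X) (hx : x ∈ A c₀) : ∃ y, SharesBranch ch c₀ A B x y :=
    hA.exists_sharesBranch hB hx
  have : Nonempty Y := ⟨(hB.nonempty c₀).some⟩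
  choose! φ hφ using hφ
  have lower {x x' y y'} (h : SharesBranch ch c₀ A B x y) (h' : SharesBranch ch c₀ A B x' y') :
      δ * dist x x' ≤ dist y y' :=
    mul_dist_le_dist hB hA hδ.le hr0 hr1 hρ (sharesBranch_comm.1 h) (sharesBranch_comm.1 h')
  have upper {x x' y y'} (h : SharesBranch ch c₀ A B x y) (h' : SharesBranch ch c₀ A B x' y') :
      dist y y' ≤ δ⁻¹ * dist x x' := by
    rw [le_inv_mul_iff₀ hδ]
    exact mul_dist_le_dist hA hB hδ.le hr0 hr1 hρ h h'
  refine ⟨φ, ⟨fun x hx => ?_, fun x hx x' hx' hφx => ?_, fun y hy => ?_⟩, δ⁻¹, inv_pos.2 hδ,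
    fun x hx x' hx' => ⟨by simpa using lower (hφ x hx) (hφ x' hx'), upper (hφ x hx) (hφ x' hx')⟩⟩
  · obtain ⟨p, hp, hmem⟩ := hφ x hx
    exact hp.1 ▸ (hmem 0).2
  · have := lower (hφ x hx) (hφ x' hx')
    rw [hφx, dist_self] at this
    exact dist_le_zero.1 (nonpos_of_mul_nonpos_right this hδ)
  · obtain ⟨x, hxy⟩ := hB.exists_sharesBranch hA hy
    rw [← sharesBranch_comm] at hxy
    have hx : x ∈ A c₀ := by
      obtain ⟨p, hp, hmem⟩ := hxy
      exact hp.1 ▸ (hmem 0).1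
    refine ⟨x, hx, dist_le_zero.1 ?_⟩
    simpa using upper (hφ x hx) hxy

end CellTree

namespace GraphDirected

variable {S : Type*} {σ : S → Type*} {V X Y : Type*}

section Defs

variable [NormedAddCommGroup X] [NormedSpace ℝ X]

def IsSelfSimilar (τ : ∀ s, σ s → S) (l : ℝ) (α : ∀ s, σ s → X) (E : S → Set X) : Prop :=
  ∀ s, E s = ⋃ e, (fun x => l • x + α s e) '' E (τ s e)

def IsSeparated (τ : ∀ s, σ s → S) (l : ℝ) (α : ∀ s, σ s → X) (δ : ℝ) (E : S → Set X) : Prop :=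
  ∀ s (e e' : σ s), e ≠ e' → ∀ x ∈ E (τ s e), ∀ y ∈ E (τ s e'),
    δ ≤ dist (l • x + α s e) (l • y + α s e')

end Defs

/-- Two systems are run on one tree by storing both positions in `pos : V = X × Y`; the cell
stands for `l ^ level • E state + π pos`, with `π` a coordinate projection. -/
structure Cell (S V : Type*) where
  state : S
  level : ℕ
  pos : V

variable [AddCommGroup V] [Module ℝ V] [NormedAddCommGroup X] [NormedSpace ℝ X]

def Cell.child (τ : ∀ s, σ s → S) (l : ℝ) (γ : ∀ s, σ s → V) (c : Cell S V) (e : σ c.state) :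
    Cell S V :=
  ⟨τ c.state e, c.level + 1, c.pos + l ^ c.level • γ c.state e⟩

def Cell.toSet (l : ℝ) (π : V →ₗ[ℝ] X) (E : S → Set X) (c : Cell S V) : Set X :=
  (fun x => l ^ c.level • x + π c.pos) '' E c.state

variable {τ : ∀ s, σ s → S} {l δ D : ℝ} {γ : ∀ s, σ s → V} {π : V →ₗ[ℝ] X} {E : S → Set X}

lemma dist_smul_add_smul_add {t : ℝ} (ht : 0 ≤ t) (p x y : X) :
    dist (t • x + p) (t • y + p) = t * dist x y := by
  rw [dist_add_right, dist_smul₀, Real.norm_of_nonneg ht]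

lemma Cell.toSet_child (c : Cell S V) (e : σ c.state) :
    (c.child τ l γ e).toSet l π E = (fun x => l ^ c.level • x + π c.pos) ''
      ((fun x => l • x + π (γ c.state e)) '' E (τ c.state e)) := by
  rw [Cell.toSet, image_image]
  congr 1
  funext x
  simp only [Cell.child, map_add, map_smul, smul_add, smul_smul, ← pow_succ]
  abel

theorem isSeparatedFamily_toSet (hl : 0 < l) (hD : 0 < D) (hc : ∀ s, IsCompact (E s))
    (hne : ∀ s, (E s).Nonempty) (hE : IsSelfSimilar τ l (fun s e => π (γ s e)) E)
    (hsep : IsSeparated τ l (fun s e => π (γ s e)) δ E)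
    (hdiam : ∀ s, ∀ x ∈ E s, ∀ y ∈ E s, dist x y ≤ D) :
    CellTree.IsSeparatedFamily (fun c => range (c.child τ l γ)) (fun c => D * l ^ c.level)
      (δ / D) (Cell.toSet l π E) where
  isCompact _ := (hc _).image (by fun_prop)
  nonempty _ := (hne _).image _
  eq_biUnion c := by
    rw [biUnion_range, Cell.toSet, hE, image_iUnion]
    simp only [Cell.toSet_child]
  dist_le := by
    rintro c _ ⟨x, hx, rfl⟩ _ ⟨y, hy, rfl⟩
    rw [dist_smul_add_smul_add (by positivity), mul_comm D]
    exact mul_le_mul_of_nonneg_left (hdiam _ x hx y hy) (by positivity)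
  le_dist := by
    rintro c _ ⟨e, rfl⟩ _ ⟨e', rfl⟩ hee' _ hx _ hy
    rw [Cell.toSet_child] at hx hy
    obtain ⟨_, ⟨x, hx, rfl⟩, rfl⟩ := hx
    obtain ⟨_, ⟨y, hy, rfl⟩, rfl⟩ := hy
    rw [dist_smul_add_smul_add (by positivity),
      show δ / D * (D * l ^ c.level) = l ^ c.level * δ by field_simp]
    exact mul_le_mul_of_nonneg_left
      (hsep _ e e' (fun h => hee' (h ▸ rfl)) x hx y hy) (by positivity)

theorem lipschitzEquiv [NormedAddCommGroup Y] [NormedSpace ℝ Y] [Finite S]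
    {α : ∀ s, σ s → X} {β : ∀ s, σ s → Y} {F : S → Set Y}
    (hl0 : 0 < l) (hl1 : l < 1) (hδ : 0 < δ)
    (hEc : ∀ s, IsCompact (E s)) (hEne : ∀ s, (E s).Nonempty) (hE : IsSelfSimilar τ l α E)
    (hEsep : IsSeparated τ l α δ E)
    (hFc : ∀ s, IsCompact (F s)) (hFne : ∀ s, (F s).Nonempty) (hF : IsSelfSimilar τ l β F)
    (hFsep : IsSeparated τ l β δ F) (s : S) :
    LipschitzEquiv (E s) (F s) := by
  obtain ⟨DE, hDE⟩ := exists_forall_dist_le_of_isCompact hEc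
  obtain ⟨DF, hDF⟩ := exists_forall_dist_le_of_isCompact hFc
  set D := max (max DE DF) 1
  have hD : 0 < D := lt_of_lt_of_le one_pos (le_max_right _ _)
  let γ : ∀ s, σ s → X × Y := fun s e => (α s e, β s e)
  have hA := isSeparatedFamily_toSet (γ := γ) (π := LinearMap.fst ℝ X Y) hl0 hD hEc hEne hE
    hEsep fun s x hx y hy => (hDE s x hx y hy).trans ((le_max_left _ _).trans (le_max_left _ _))
  have hB := isSeparatedFamily_toSet (γ := γ) (π := LinearMap.snd ℝ X Y) hl0 hD hFc hFne hF
    hFsep fun s x hx y hy => (hDF s x hx y hy).trans ((le_max_right _ _).trans (le_max_left _ _))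
  have hρ (c : Cell S (X × Y)) :
      ∀ c' ∈ range (c.child τ l γ), D * l ^ c'.level ≤ l * (D * l ^ c.level) := by
    rintro _ ⟨e, rfl⟩
    exact (by simp only [Cell.child]; ring : _ = _).le
  simpa [Cell.toSet] using
    CellTree.lipschitzEquiv hA hB (div_pos hδ hD) hl0.le hl1 hρ ⟨s, 0, 0⟩

lemma isSeparated_of_windows {τ : ∀ s, σ s → S} {l δ : ℝ} {α : ∀ s, σ s → ℝ}
    {E : S → Set ℝ} {w : S → ℝ} (hl : 0 ≤ l) (hE : ∀ s, E s ⊆ Icc 0 (w s))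
    (hw : ∀ s (e e' : σ s), e ≠ e' →
      α s e + l * w (τ s e) + δ ≤ α s e' ∨ α s e' + l * w (τ s e') + δ ≤ α s e) :
    IsSeparated τ l α δ E := by
  intro s e e' hee' x hx y hy
  obtain ⟨hx0, hx1⟩ := hE _ hx
  obtain ⟨hy0, hy1⟩ := hE _ hy
  have := mul_le_mul_of_nonneg_left hx1 hl
  have := mul_le_mul_of_nonneg_left hy1 hl
  have := mul_nonneg hl hx0
  have := mul_nonneg hl hy0
  rw [smul_eq_mul, smul_eq_mul, Real.dist_eq, le_abs]
  rcases hw s e e' hee' with h | h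
  · right; linarith
  · left; linarith

end GraphDirected

lemma subset_Icc_zero_one_of_eq_iUnion {ι : Type*} {l : ℝ} {c : ι → ℝ} {K : Set ℝ}
    (hl0 : 0 < l) (hl1 : l < 1) (hc : ∀ i, 0 ≤ c i ∧ c i ≤ 1 - l)
    (hKc : IsCompact K) (hKne : K.Nonempty) (hK : K = ⋃ i, (fun x => l * x + c i) '' K) :
    K ⊆ Icc 0 1 := by
  have hpre (x : ℝ) (hx : x ∈ K) : ∃ i, ∃ y ∈ K, l * y + c i = x := by
    rw [hK] at hx
    simpa using hx
  obtain ⟨m, hm, hmin⟩ := hKc.exists_isLeast hKne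
  obtain ⟨M, hM, hmax⟩ := hKc.exists_isGreatest hKne
  have hm0 : 0 ≤ m := by
    obtain ⟨i, y, hy, rfl⟩ := hpre m hm
    nlinarith [hmin hy, hc i]
  have hM1 : M ≤ 1 := by
    obtain ⟨i, y, hy, rfl⟩ := hpre M hM
    nlinarith [hmax hy, hc i]
  exact fun x hx => ⟨hm0.trans (hmin hx), (hmax hx).trans hM1⟩

lemma eq_image_iUnion_union_of_eq_iUnion {l : ℝ} {K : Set ℝ} {n : ℕ} {c : Fin (n + 1) → ℝ}
    {γ : Fin n → ℝ} (hK : K = ⋃ i, (fun x => l * x + c i) '' K)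
    (hγ : ∀ j, l * γ j = c j.castSucc) :
    K = (l * ·) '' (⋃ j, (· + γ j) '' K) ∪ (fun x => l * x + c (Fin.last n)) '' K := by
  conv_lhs => rw [hK]
  rw [image_iUnion]
  simp only [image_image, mul_add, hγ]
  ext x
  simp only [mem_iUnion, mem_union, Fin.exists_fin_succ']

lemma image_add_eq_union_of_eq_union {l β : ℝ} {K C : Set ℝ}
    (hK : K = (l * ·) '' C ∪ (fun x => l * x + β) '' K) (o : ℝ) :
    (· + o) '' K = (fun x => l * x + o) '' C ∪ (fun x => l * x + (o + β)) '' K := by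
  conv_lhs => rw [hK]
  simp only [image_union, image_image]
  congr 2 with x
  ring

namespace ExampleAttractors

open GraphDirected

/-- State `true` is `K`, state `false` the block `⋃ j, K + γ j` (see `tiles`). -/
def Edge : Bool → Type
  | true => Fin 2
  | false => Fin 6

def target : ∀ s, Edge s → Bool
  | true => ![false, true]
  | false => ![false, false, false, false, true, true]

def translations (l : ℝ) (u : Fin 6 → ℝ) : ∀ s, Edge s → ℝ
  | true => ![0, 1 - l]
  | false => u

def block (γ : Fin 4 → ℝ) (K : Set ℝ) : Set ℝ := ⋃ j, (· + γ j) '' K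

def tiles (γ : Fin 4 → ℝ) (K : Set ℝ) : Bool → Set ℝ
  | true => K
  | false => block γ K

def width : Bool → ℝ
  | true => 1
  | false => 4

def offsetsA (l : ℝ) : Fin 4 → ℝ := ![0, 1 - l, 2 * (1 - l), 3]

def offsetsB (l : ℝ) : Fin 4 → ℝ := ![0, 1 - l, 2, 3 - l]

def translationsA (l : ℝ) : ∀ s, Edge s → ℝ :=
  translations l ![0, 1 - l, 2 * (1 - l), 3, 3 * (1 - l), 4 - l]

def translationsB (l : ℝ) : ∀ s, Edge s → ℝ :=
  translations l ![0, 1 - l, 2, 3 - l, 2 * (1 - l), 4 - 2 * l]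

variable {l : ℝ} {K : Set ℝ} {γ : Fin 4 → ℝ}

lemma isCompact_tiles (hK : IsCompact K) (s : Bool) : IsCompact (tiles γ K s) := by
  cases s
  · exact isCompact_iUnion fun j => hK.image (continuous_add_const _)
  · exact hK

lemma nonempty_tiles (hK : K.Nonempty) (s : Bool) : (tiles γ K s).Nonempty := by
  cases s
  · exact nonempty_iUnion.2 ⟨0, hK.image _⟩
  · exact hK

lemma tiles_subset_Icc (hK : K ⊆ Icc 0 1) (hγ : ∀ j, 0 ≤ γ j ∧ γ j ≤ 3) (s : Bool) :
    tiles γ K s ⊆ Icc 0 (width s) := by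
  cases s
  · rintro _ ⟨_, ⟨j, rfl⟩, x, hx, rfl⟩
    obtain ⟨hx0, hx1⟩ := hK hx
    obtain ⟨hγ0, hγ1⟩ := hγ j
    simp only [width, mem_Icc]
    constructor <;> linarith
  · exact hK

lemma tiles_true_eq_iUnion {u : Fin 6 → ℝ}
    (hK : K = (l * ·) '' block γ K ∪ (fun x => l * x + (1 - l)) '' K) :
    tiles γ K true =
      ⋃ e, (fun x => l • x + translations l u true e) '' tiles γ K (target true e) := by
  conv_lhs => rw [tiles, hK]
  ext x
  simp [Edge, Fin.exists_fin_succ, target, translations, tiles]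

lemma isSelfSimilar_a (hK : K = (l * ·) '' block (offsetsA l) K ∪ (fun x => l * x + (1 - l)) '' K) :
    IsSelfSimilar target l (translationsA l) (tiles (offsetsA l) K) := by
  rintro (_ | _)
  · have hsub : K ⊆ block (offsetsA l) K := fun y hy => by
      rw [block, mem_iUnion]
      exact ⟨0, y, hy, by simp [offsetsA]⟩
    ext x
    -- the split translates `K` and `K + (1 - l)` spill into the blocks at `1 - l`, `2 (1 - l)`
    have h1 := @image_mono _ _ (fun y => l * y + (1 - l)) _ _ hsub x
    have h2 := @image_mono _ _ (fun y => l * y + 2 * (1 - l)) _ _ hsub x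
    conv_lhs => rw [tiles, block]
    simp only [mem_iUnion, Fin.exists_fin_succ, Fin.exists_fin_zero, target, translationsA,
      translations, Edge]
    simp only [Matrix.cons_val_zero, Matrix.cons_val_succ, tiles, offsetsA,
      image_add_eq_union_of_eq_union hK, mem_union, smul_eq_mul, or_false] at h1 h2 ⊢
    ring_nf at h1 h2 ⊢
    tauto
  · exact tiles_true_eq_iUnion hK

lemma isSelfSimilar_b (hK : K = (l * ·) '' block (offsetsB l) K ∪ (fun x => l * x + (1 - l)) '' K) :
    IsSelfSimilar target l (translationsB l) (tiles (offsetsB l) K) := by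
  rintro (_ | _)
  · have hsub : K ⊆ block (offsetsB l) K := fun y hy => by
      rw [block, mem_iUnion]
      exact ⟨0, y, hy, by simp [offsetsB]⟩
    ext x
    -- the split translates `K` and `K + 2` spill into the blocks at `1 - l`, `3 - l`
    have h1 := @image_mono _ _ (fun y => l * y + (1 - l)) _ _ hsub x
    have h2 := @image_mono _ _ (fun y => l * y + (3 - l)) _ _ hsub x
    conv_lhs => rw [tiles, block]
    simp only [mem_iUnion, Fin.exists_fin_succ, Fin.exists_fin_zero, target, translationsB,
      translations, Edge]
    simp only [Matrix.cons_val_zero, Matrix.cons_val_succ, tiles, offsetsB,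
      image_add_eq_union_of_eq_union hK, mem_union, smul_eq_mul, or_false] at h1 h2 ⊢
    ring_nf at h1 h2 ⊢
    tauto
  · exact tiles_true_eq_iUnion hK

lemma isSeparated_a (hl0 : 0 < l) (hl5 : l < 1 / 5) (hK : K ⊆ Icc 0 1) :
    IsSeparated target l (translationsA l) (min l (1 - 5 * l)) (tiles (offsetsA l) K) := by
  refine isSeparated_of_windows hl0.le (tiles_subset_Icc hK fun j => ?_) ?_
  · fin_cases j <;> constructor <;> simp [offsetsA] <;> linarith
  have h1 := min_le_left l (1 - 5 * l)
  have h2 := min_le_right l (1 - 5 * l)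
  rintro (_ | _) e e' hee'
  · change Fin 6 at e e'
    fin_cases e <;> fin_cases e' <;> simp [translationsA, translations, target, width] at hee' ⊢ <;>
      first | exact absurd rfl hee' | (left; linarith) | (right; linarith)
  · change Fin 2 at e e'
    fin_cases e <;> fin_cases e' <;> simp [translationsA, translations, target, width] at hee' ⊢ <;>
      first | exact absurd rfl hee' | (left; linarith) | (right; linarith)

lemma isSeparated_b (hl0 : 0 < l) (hl5 : l < 1 / 5) (hK : K ⊆ Icc 0 1) :
    IsSeparated target l (translationsB l) (min l (1 - 5 * l)) (tiles (offsetsB l) K) := by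
  refine isSeparated_of_windows hl0.le (tiles_subset_Icc hK fun j => ?_) ?_
  · fin_cases j <;> constructor <;> simp [offsetsB] <;> linarith
  have h1 := min_le_left l (1 - 5 * l)
  have h2 := min_le_right l (1 - 5 * l)
  rintro (_ | _) e e' hee'
  · change Fin 6 at e e'
    fin_cases e <;> fin_cases e' <;> simp [translationsB, translations, target, width] at hee' ⊢ <;>
      first | exact absurd rfl hee' | (left; linarith) | (right; linarith)
  · change Fin 2 at e e'
    fin_cases e <;> fin_cases e' <;> simp [translationsB, translations, target, width] at hee' ⊢ <;>
      first | exact absurd rfl hee' | (left; linarith) | (right; linarith)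

end ExampleAttractors

open ExampleAttractors in
theorem example_attractors_lipschitzEquiv
    (l : ℝ) (hl : 0 < l ∧ l < 1 / 5)
    (a b : Fin 5 → ℝ)
    (ha : a = ![0, l * (1 - l), 2 * l * (1 - l), 3 * l, 1 - l])
    (hb : b = ![0, l * (1 - l), 2 * l, 3 * l - l ^ 2, 1 - l])
    (Ka Kb : Set ℝ)
    (hKane : Ka.Nonempty) (hKac : IsCompact Ka)
    (hKa : Ka = ⋃ i : Fin 5, (fun x => l * x + a i) '' Ka)
    (hKbne : Kb.Nonempty) (hKbc : IsCompact Kb)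
    (hKb : Kb = ⋃ i : Fin 5, (fun x => l * x + b i) '' Kb) :
    LipschitzEquiv Ka Kb := by
  obtain ⟨hl0, hl5⟩ := hl
  have hl1 : l < 1 := by linarith
  subst ha hb
  have hKa01 : Ka ⊆ Icc 0 1 := subset_Icc_zero_one_of_eq_iUnion hl0 hl1
    (fun i => by fin_cases i <;> constructor <;> simp <;> nlinarith) hKac hKane hKa
  have hKb01 : Kb ⊆ Icc 0 1 := subset_Icc_zero_one_of_eq_iUnion hl0 hl1
    (fun i => by fin_cases i <;> constructor <;> simp <;> nlinarith) hKbc hKbne hKb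
  have hKa' := eq_image_iUnion_union_of_eq_iUnion hKa (γ := offsetsA l)
    (fun j => by fin_cases j <;> simp [offsetsA] <;> ring)
  have hKb' := eq_image_iUnion_union_of_eq_iUnion hKb (γ := offsetsB l)
    (fun j => by fin_cases j <;> simp [offsetsB] <;> ring)
  exact GraphDirected.lipschitzEquiv hl0 hl1 (lt_min hl0 (by linarith))
    (isCompact_tiles hKac) (nonempty_tiles hKane) (isSelfSimilar_a hKa')
    (isSeparated_a hl0 hl5 hKa01)
    (isCompact_tiles hKbc) (nonempty_tiles hKbne) (isSelfSimilar_b hKb')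
    (isSeparated_b hl0 hl5 hKb01) true
end

section
/- Let 0 < λ < (2−√2)/2, let F be the attractor of the IFS {f₁,…,f₆} on ℝ² with f₁(p)=λp, f₂(p)=λp+(1−λ,0), f₃(p)=λp+(1−λ,1−λ), f₄(p)=λp+(0,1−λ), f₅(p)=λp+(λ(1−λ),(1−λ)²), f₆(p)=λp+(0,(1−λ)(1−2λ)). Define F₁=f₁(F), F₂=f₂(F), F₃=f₃(F), F₅=f₅(F), F₄=f₄(F)∖(f₄∘f₂)(F), F₆=f₆(F)∖(f₆∘f₃)(F). Then F₁,…,F₆ are pairwise disjoint nonempty compact sets whose union is F. -/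
theorem cons_val_five {α : Type*} (a b c d e g : α) : (![a,b,c,d,e,g] : Fin 6 → α) 5 = g := rfl

theorem contract_aux {l : ℝ} (hl0 : 0 < l) (hl1 : l < 1) {ι : Type} (c : ι → ℝ × ℝ)
    {K G : Set (ℝ × ℝ)} (hK : IsCompact K) (hG : IsClosed G) (hGne : G.Nonempty)
    (hstep : ∀ x ∈ K, x ∈ G ∨ ∃ i, ∃ y ∈ K, x = l • y + c i)
    (hinv : ∀ i, ∀ y ∈ G, l • y + c i ∈ G) : K ⊆ G := by
  rcases K.eq_empty_or_nonempty with hKe | hKne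
  · simp [hKe]
  obtain ⟨x₀, hx₀, hmax⟩ := hK.exists_isMaxOn hKne (Metric.continuous_infDist_pt G).continuousOn
  have hD0 : 0 ≤ Metric.infDist x₀ G := Metric.infDist_nonneg
  have hDle : Metric.infDist x₀ G ≤ l * Metric.infDist x₀ G := by
    rcases hstep x₀ hx₀ with h | ⟨i, y, hyK, rfl⟩
    · rw [Metric.infDist_zero_of_mem h]; simp
    · obtain ⟨g, hgG, hg⟩ := hG.exists_infDist_eq_dist hGne y
      have h1 : Metric.infDist (l • y + c i) G ≤ l * Metric.infDist y G := by
        calc Metric.infDist (l • y + c i) G ≤ dist (l • y + c i) (l • g + c i) :=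
              Metric.infDist_le_dist_of_mem (hinv i g hgG)
          _ = l * dist y g := by rw [dist_add_right, dist_smul₀, Real.norm_of_nonneg hl0.le]
          _ = l * Metric.infDist y G := by rw [hg]
      have h2 : Metric.infDist y G ≤ Metric.infDist (l • y + c i) G := hmax hyK
      nlinarith [Metric.infDist_nonneg (x := y) (s := G)]
  have hDz : Metric.infDist x₀ G = 0 := by nlinarith
  intro x hx
  have h3 : Metric.infDist x G ≤ Metric.infDist x₀ G := hmax hx
  exact (hG.mem_iff_infDist_zero hGne).mpr (le_antisymm (by linarith) Metric.infDist_nonneg)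

set_option maxHeartbeats 4000000 in
theorem planar_partition
    (l : ℝ) (hl : 0 < l ∧ l < (2 - Real.sqrt 2) / 2)
    (f : Fin 6 → ℝ × ℝ → ℝ × ℝ)
    (hf : f = ![fun p => l • p,
                fun p => l • p + (1 - l, 0),
                fun p => l • p + (1 - l, 1 - l),
                fun p => l • p + (0, 1 - l),
                fun p => l • p + (l * (1 - l), (1 - l) ^ 2),
                fun p => l • p + (0, (1 - l) * (1 - 2 * l))])
    (F : Set (ℝ × ℝ)) (hFne : F.Nonempty) (hFc : IsCompact F)
    (hFeq : F = ⋃ i : Fin 6, f i '' F)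
    (S : Fin 6 → Set (ℝ × ℝ))
    (hS : S = ![f 0 '' F, f 1 '' F, f 2 '' F,
                f 3 '' F \ (f 3 ∘ f 1) '' F,
                f 4 '' F,
                f 5 '' F \ (f 5 ∘ f 2) '' F]) :
    (∀ i, (S i).Nonempty ∧ IsCompact (S i)) ∧
    (Set.univ : Set (Fin 6)).PairwiseDisjoint S ∧
    ⋃ i, S i = F := by
  obtain ⟨hl0, hlu⟩ := hl
  have hs2 : Real.sqrt 2 ^ 2 = 2 := Real.sq_sqrt (by norm_num)
  have hs1 : (1:ℝ) < Real.sqrt 2 := by nlinarith [Real.sqrt_nonneg 2]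
  have hl2 : l < 1/2 := by nlinarith
  have hkey : 0 < 2*l^2 - 4*l + 1 := by
    nlinarith [mul_pos (show (0:ℝ) < (2 - Real.sqrt 2)/2 - l by linarith)
      (show (0:ℝ) < (2 + Real.sqrt 2)/2 - l by nlinarith)]
  have hk2 : l < (1-l)^2 := by nlinarith
  -- evaluate f
  have hf0 : f 0 = fun p => l • p := by rw [hf]; rfl
  have hf1 : f 1 = fun p => l • p + (1 - l, 0) := by rw [hf]; rfl
  have hf2 : f 2 = fun p => l • p + (1 - l, 1 - l) := by rw [hf]; rfl
  have hf3 : f 3 = fun p => l • p + (0, 1 - l) := by rw [hf]; rfl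
  have hf4 : f 4 = fun p => l • p + (l * (1 - l), (1 - l) ^ 2) := by rw [hf]; rfl
  have hf5 : f 5 = fun p => l • p + (0, (1 - l) * (1 - 2 * l)) := by rw [hf]; rfl
  have hS0 : S 0 = f 0 '' F := by rw [hS]; rfl
  have hS1 : S 1 = f 1 '' F := by rw [hS]; rfl
  have hS2 : S 2 = f 2 '' F := by rw [hS]; rfl
  have hS3 : S 3 = f 3 '' F \ (f 3 ∘ f 1) '' F := by rw [hS]; rfl
  have hS4 : S 4 = f 4 '' F := by rw [hS]; rfl
  have hS5 : S 5 = f 5 '' F \ (f 5 ∘ f 2) '' F := by rw [hS]; rfl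
  -- coordinates of the maps
  have hc0 : ∀ y : ℝ × ℝ, (f 0 y).1 = l * y.1 ∧ (f 0 y).2 = l * y.2 := by
    intro y; rw [hf0]; exact ⟨rfl, rfl⟩
  have hc1 : ∀ y : ℝ × ℝ, (f 1 y).1 = l * y.1 + (1 - l) ∧ (f 1 y).2 = l * y.2 + 0 := by
    intro y; rw [hf1]; exact ⟨rfl, rfl⟩
  have hc2 : ∀ y : ℝ × ℝ, (f 2 y).1 = l * y.1 + (1 - l) ∧ (f 2 y).2 = l * y.2 + (1 - l) := by
    intro y; rw [hf2]; exact ⟨rfl, rfl⟩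
  have hc3 : ∀ y : ℝ × ℝ, (f 3 y).1 = l * y.1 + 0 ∧ (f 3 y).2 = l * y.2 + (1 - l) := by
    intro y; rw [hf3]; exact ⟨rfl, rfl⟩
  have hc4 : ∀ y : ℝ × ℝ, (f 4 y).1 = l * y.1 + l * (1 - l) ∧ (f 4 y).2 = l * y.2 + (1 - l) ^ 2 := by
    intro y; rw [hf4]; exact ⟨rfl, rfl⟩
  have hc5 : ∀ y : ℝ × ℝ, (f 5 y).1 = l * y.1 + 0 ∧ (f 5 y).2 = l * y.2 + (1 - l) * (1 - 2 * l) := by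
    intro y; rw [hf5]; exact ⟨rfl, rfl⟩
  have hsub : ∀ i, f i '' F ⊆ F := by
    intro i
    conv_rhs => rw [hFeq]
    exact Set.subset_iUnion (fun j => f j '' F) i
  have hcases : ∀ x ∈ F, x ∈ f 0 '' F ∨ x ∈ f 1 '' F ∨ x ∈ f 2 '' F ∨ x ∈ f 3 '' F ∨
      x ∈ f 4 '' F ∨ x ∈ f 5 '' F := by
    intro x hx
    rw [hFeq] at hx
    simp only [Set.mem_iUnion] at hx
    obtain ⟨i, hxi⟩ := hx
    fin_cases i
    · exact Or.inl hxi
    · exact Or.inr (Or.inl hxi)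
    · exact Or.inr (Or.inr (Or.inl hxi))
    · exact Or.inr (Or.inr (Or.inr (Or.inl hxi)))
    · exact Or.inr (Or.inr (Or.inr (Or.inr (Or.inl hxi))))
    · exact Or.inr (Or.inr (Or.inr (Or.inr (Or.inr hxi))))
  have haff : ∀ (i : Fin 6) (y : ℝ × ℝ), f i y = l • y + f i 0 := by
    intro i y
    fin_cases i
    · show f 0 y = l • y + f 0 0
      rw [hf0]; simp
    · show f 1 y = l • y + f 1 0
      rw [hf1]; simp
    · show f 2 y = l • y + f 2 0
      rw [hf2]; simp
    · show f 3 y = l • y + f 3 0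
      rw [hf3]; simp
    · show f 4 y = l • y + f 4 0
      rw [hf4]; simp
    · show f 5 y = l • y + f 5 0
      rw [hf5]; simp
  -- F is contained in the unit square
  have hBcl : IsClosed {p : ℝ × ℝ | 0 ≤ p.1 ∧ p.1 ≤ 1 ∧ 0 ≤ p.2 ∧ p.2 ≤ 1} := by
    have h1 : IsClosed {p : ℝ × ℝ | 0 ≤ p.1} := isClosed_le continuous_const continuous_fst
    have h2 : IsClosed {p : ℝ × ℝ | p.1 ≤ 1} := isClosed_le continuous_fst continuous_const
    have h3 : IsClosed {p : ℝ × ℝ | 0 ≤ p.2} := isClosed_le continuous_const continuous_snd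
    have h4 : IsClosed {p : ℝ × ℝ | p.2 ≤ 1} := isClosed_le continuous_snd continuous_const
    exact h1.inter (h2.inter (h3.inter h4))
  -- each map sends the unit square into itself
  have hmap : ∀ (k : Fin 6) (y : ℝ × ℝ), 0 ≤ y.1 → y.1 ≤ 1 → 0 ≤ y.2 → y.2 ≤ 1 →
      0 ≤ (f k y).1 ∧ (f k y).1 ≤ 1 ∧ 0 ≤ (f k y).2 ∧ (f k y).2 ≤ 1 := by
    intro k y u1 u2 u3 u4
    fin_cases k
    · show 0 ≤ (f 0 y).1 ∧ (f 0 y).1 ≤ 1 ∧ 0 ≤ (f 0 y).2 ∧ (f 0 y).2 ≤ 1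
      exact ⟨by rw [(hc0 y).1]; nlinarith, by rw [(hc0 y).1]; nlinarith,
        by rw [(hc0 y).2]; nlinarith, by rw [(hc0 y).2]; nlinarith⟩
    · show 0 ≤ (f 1 y).1 ∧ (f 1 y).1 ≤ 1 ∧ 0 ≤ (f 1 y).2 ∧ (f 1 y).2 ≤ 1
      exact ⟨by rw [(hc1 y).1]; nlinarith, by rw [(hc1 y).1]; nlinarith,
        by rw [(hc1 y).2]; nlinarith, by rw [(hc1 y).2]; nlinarith⟩
    · show 0 ≤ (f 2 y).1 ∧ (f 2 y).1 ≤ 1 ∧ 0 ≤ (f 2 y).2 ∧ (f 2 y).2 ≤ 1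
      exact ⟨by rw [(hc2 y).1]; nlinarith, by rw [(hc2 y).1]; nlinarith,
        by rw [(hc2 y).2]; nlinarith, by rw [(hc2 y).2]; nlinarith⟩
    · show 0 ≤ (f 3 y).1 ∧ (f 3 y).1 ≤ 1 ∧ 0 ≤ (f 3 y).2 ∧ (f 3 y).2 ≤ 1
      exact ⟨by rw [(hc3 y).1]; nlinarith, by rw [(hc3 y).1]; nlinarith,
        by rw [(hc3 y).2]; nlinarith, by rw [(hc3 y).2]; nlinarith⟩
    · show 0 ≤ (f 4 y).1 ∧ (f 4 y).1 ≤ 1 ∧ 0 ≤ (f 4 y).2 ∧ (f 4 y).2 ≤ 1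
      exact ⟨by rw [(hc4 y).1]; nlinarith, by rw [(hc4 y).1]; nlinarith,
        by rw [(hc4 y).2]; nlinarith, by rw [(hc4 y).2]; nlinarith⟩
    · show 0 ≤ (f 5 y).1 ∧ (f 5 y).1 ≤ 1 ∧ 0 ≤ (f 5 y).2 ∧ (f 5 y).2 ≤ 1
      exact ⟨by rw [(hc5 y).1]; nlinarith, by rw [(hc5 y).1]; nlinarith,
        by rw [(hc5 y).2]; nlinarith, by rw [(hc5 y).2]; nlinarith⟩
  have hFB : ∀ x ∈ F, 0 ≤ x.1 ∧ x.1 ≤ 1 ∧ 0 ≤ x.2 ∧ x.2 ≤ 1 := by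
    have hFsubB : F ⊆ {p : ℝ × ℝ | 0 ≤ p.1 ∧ p.1 ≤ 1 ∧ 0 ≤ p.2 ∧ p.2 ≤ 1} := by
      apply contract_aux hl0 (by linarith : l < 1) (fun i : Fin 6 => f i 0) hFc hBcl
        ⟨(0,0), by norm_num⟩
      · intro x hx
        right
        rw [hFeq] at hx
        simp only [Set.mem_iUnion] at hx
        obtain ⟨i, y, hy, hxy⟩ := hx
        exact ⟨i, y, hy, by rw [← hxy, haff i y]⟩
      · intro i y hy
        obtain ⟨u1, u2, u3, u4⟩ := hy
        rw [← haff i y]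
        exact hmap i y u1 u2 u3 u4
    exact fun x hx => hFsubB hx
  -- bounding boxes of the six pieces
  have hb0 : ∀ x ∈ f 0 '' F, x.1 ≤ l ∧ x.2 ≤ l ∧ 0 ≤ x.1 ∧ 0 ≤ x.2 := by
    rintro x ⟨y, hy, rfl⟩
    obtain ⟨u1, u2, u3, u4⟩ := hFB y hy
    refine ⟨?_, ?_, ?_, ?_⟩
    · rw [(hc0 y).1]; nlinarith
    · rw [(hc0 y).2]; nlinarith
    · rw [(hc0 y).1]; nlinarith
    · rw [(hc0 y).2]; nlinarith
  have hb1 : ∀ x ∈ f 1 '' F, 1 - l ≤ x.1 ∧ x.2 ≤ l := by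
    rintro x ⟨y, hy, rfl⟩
    obtain ⟨u1, u2, u3, u4⟩ := hFB y hy
    refine ⟨?_, ?_⟩
    · rw [(hc1 y).1]; nlinarith
    · rw [(hc1 y).2]; nlinarith
  have hb2 : ∀ x ∈ f 2 '' F, 1 - l ≤ x.1 ∧ 1 - l ≤ x.2 := by
    rintro x ⟨y, hy, rfl⟩
    obtain ⟨u1, u2, u3, u4⟩ := hFB y hy
    refine ⟨?_, ?_⟩
    · rw [(hc2 y).1]; nlinarith
    · rw [(hc2 y).2]; nlinarith
  have hb3 : ∀ x ∈ f 3 '' F, x.1 ≤ l ∧ 1 - l ≤ x.2 := by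
    rintro x ⟨y, hy, rfl⟩
    obtain ⟨u1, u2, u3, u4⟩ := hFB y hy
    refine ⟨?_, ?_⟩
    · rw [(hc3 y).1]; nlinarith
    · rw [(hc3 y).2]; nlinarith
  have hb4 : ∀ x ∈ f 4 '' F, l - l^2 ≤ x.1 ∧ x.1 ≤ 2*l - l^2 ∧ (1-l)^2 ≤ x.2 ∧ x.2 ≤ 1 - l + l^2 := by
    rintro x ⟨y, hy, rfl⟩
    obtain ⟨u1, u2, u3, u4⟩ := hFB y hy
    refine ⟨?_, ?_, ?_, ?_⟩
    · rw [(hc4 y).1]; nlinarith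
    · rw [(hc4 y).1]; nlinarith
    · rw [(hc4 y).2]; nlinarith
    · rw [(hc4 y).2]; nlinarith
  have hb5 : ∀ x ∈ f 5 '' F, x.1 ≤ l ∧ 1 - 3*l + 2*l^2 ≤ x.2 ∧ x.2 ≤ 1 - 2*l + 2*l^2 := by
    rintro x ⟨y, hy, rfl⟩
    obtain ⟨u1, u2, u3, u4⟩ := hFB y hy
    refine ⟨?_, ?_, ?_⟩
    · rw [(hc5 y).1]; nlinarith
    · rw [(hc5 y).2]; nlinarith
    · rw [(hc5 y).2]; nlinarith
  -- continuity and compactness of pieces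
  have hcont : ∀ i, Continuous (f i) := by
    intro i
    fin_cases i <;> rw [hf] <;> simp [cons_val_five] <;>
      first
        | fun_prop
        | (constructor <;> fun_prop)
  have hcpt : ∀ i, IsCompact (f i '' F) := fun i => hFc.image (hcont i)
  -- the two algebraic identities  f₄∘f₂ = f₅∘f₄  and  f₆∘f₃ = f₅∘f₁
  have hid1 : ∀ z : ℝ × ℝ, f 3 (f 1 z) = f 4 (f 3 z) := by
    intro z
    apply Prod.ext
    · rw [(hc3 (f 1 z)).1, (hc1 z).1, (hc4 (f 3 z)).1, (hc3 z).1]; ring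
    · rw [(hc3 (f 1 z)).2, (hc1 z).2, (hc4 (f 3 z)).2, (hc3 z).2]; ring
  have hid2 : ∀ z : ℝ × ℝ, f 5 (f 2 z) = f 4 (f 0 z) := by
    intro z
    apply Prod.ext
    · rw [(hc5 (f 2 z)).1, (hc2 z).1, (hc4 (f 0 z)).1, (hc0 z).1]; ring
    · rw [(hc5 (f 2 z)).2, (hc2 z).2, (hc4 (f 0 z)).2, (hc0 z).2]; ring
  -- claim A : points of F in the top-left box belong to f 3 '' F
  have hTcl : IsClosed {p : ℝ × ℝ | p.1 ≤ l ∧ 1 - l ≤ p.2} :=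
    (isClosed_le continuous_fst continuous_const).inter (isClosed_le continuous_const continuous_snd)
  have hA : F ∩ {p : ℝ × ℝ | p.1 ≤ l ∧ 1 - l ≤ p.2} ⊆ f 3 '' F := by
    apply contract_aux hl0 (by linarith : l < 1)
      (fun _ : Unit => ((l * (1 - l), (1 - l) ^ 2) : ℝ × ℝ))
      (hFc.inter_right hTcl) (hcpt 3).isClosed (hFne.image (f 3))
    · rintro x ⟨hxF, hx1, hx2⟩
      rcases hcases x hxF with h | h | h | h | h | h
      · exfalso
        obtain ⟨y, hy, rfl⟩ := h
        obtain ⟨u1, u2, u3, u4⟩ := hFB y hy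
        rw [(hc0 y).2] at hx2; nlinarith
      · exfalso
        obtain ⟨y, hy, rfl⟩ := h
        obtain ⟨u1, u2, u3, u4⟩ := hFB y hy
        rw [(hc1 y).1] at hx1; nlinarith
      · exfalso
        obtain ⟨y, hy, rfl⟩ := h
        obtain ⟨u1, u2, u3, u4⟩ := hFB y hy
        rw [(hc2 y).1] at hx1; nlinarith
      · exact Or.inl h
      · right
        obtain ⟨y, hy, rfl⟩ := h
        obtain ⟨u1, u2, u3, u4⟩ := hFB y hy
        rw [(hc4 y).1] at hx1
        rw [(hc4 y).2] at hx2
        refine ⟨(), y, ⟨hy, by nlinarith, by nlinarith⟩, ?_⟩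
        rw [hf4]
      · exfalso
        obtain ⟨y, hy, rfl⟩ := h
        obtain ⟨u1, u2, u3, u4⟩ := hFB y hy
        rw [(hc5 y).2] at hx2; nlinarith
    · rintro _ y ⟨z, hz, rfl⟩
      refine ⟨f 1 z, hsub 1 ⟨z, hz, rfl⟩, ?_⟩
      apply Prod.ext
      · show (f 3 (f 1 z)).1 = (l • f 3 z).1 + l * (1 - l)
        show (f 3 (f 1 z)).1 = l * (f 3 z).1 + l * (1 - l)
        rw [(hc3 (f 1 z)).1, (hc1 z).1, (hc3 z).1]; ring
      · show (f 3 (f 1 z)).2 = l * (f 3 z).2 + (1 - l) ^ 2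
        rw [(hc3 (f 1 z)).2, (hc1 z).2, (hc3 z).2]; ring
  -- claim B : points of F in the bottom-left box belong to f 0 '' F
  have hB1 : ∀ x ∈ F, x.1 ≤ l → x.2 ≤ l → x ∈ f 0 '' F := by
    intro x hxF hx1 hx2
    rcases hcases x hxF with h | h | h | h | h | h
    · exact h
    · exfalso
      obtain ⟨y, hy, rfl⟩ := h
      obtain ⟨u1, u2, u3, u4⟩ := hFB y hy
      rw [(hc1 y).1] at hx1; nlinarith
    · exfalso
      obtain ⟨y, hy, rfl⟩ := h
      obtain ⟨u1, u2, u3, u4⟩ := hFB y hy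
      rw [(hc2 y).1] at hx1; nlinarith
    · exfalso
      obtain ⟨y, hy, rfl⟩ := h
      obtain ⟨u1, u2, u3, u4⟩ := hFB y hy
      rw [(hc3 y).2] at hx2; nlinarith
    · exfalso
      obtain ⟨y, hy, rfl⟩ := h
      obtain ⟨u1, u2, u3, u4⟩ := hFB y hy
      rw [(hc4 y).2] at hx2; nlinarith
    · exfalso
      obtain ⟨y, hy, rfl⟩ := h
      obtain ⟨u1, u2, u3, u4⟩ := hFB y hy
      rw [(hc5 y).2] at hx2; nlinarith
  -- injectivity
  have hbase : ∀ c : ℝ × ℝ, Function.Injective (fun p : ℝ × ℝ => l • p + c) := by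
    intro c a b h
    have h' : l • a = l • b := by
      have := add_right_cancel h
      exact this
    exact smul_right_injective (ℝ × ℝ) (ne_of_gt hl0) h'
  have hinj3 : Function.Injective (f 3) := by rw [hf3]; exact hbase _
  have hinj5 : Function.Injective (f 5) := by rw [hf5]; exact hbase _
  -- decompositions of F minus one piece
  have hU1 : F \ f 1 '' F = f 0 '' F ∪ f 2 '' F ∪ f 3 '' F ∪ f 4 '' F ∪ f 5 '' F := by
    ext x
    constructor
    · rintro ⟨hxF, hxn⟩
      rcases hcases x hxF with h | h | h | h | h | h
      · exact Or.inl (Or.inl (Or.inl (Or.inl h)))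
      · exact absurd h hxn
      · exact Or.inl (Or.inl (Or.inl (Or.inr h)))
      · exact Or.inl (Or.inl (Or.inr h))
      · exact Or.inl (Or.inr h)
      · exact Or.inr h
    · intro hx
      rcases hx with ((((h | h) | h) | h) | h)
      · exact ⟨hsub 0 h, fun hx1 => by
          have b := hb0 x h; have b' := hb1 x hx1; linarith [b.1, b'.1]⟩
      · exact ⟨hsub 2 h, fun hx1 => by
          have b := hb2 x h; have b' := hb1 x hx1; linarith [b.2, b'.2]⟩
      · exact ⟨hsub 3 h, fun hx1 => by
          have b := hb3 x h; have b' := hb1 x hx1; linarith [b.1, b'.1]⟩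
      · exact ⟨hsub 4 h, fun hx1 => by
          have b := hb4 x h; have b' := hb1 x hx1; nlinarith [b.2.1, b'.1]⟩
      · exact ⟨hsub 5 h, fun hx1 => by
          have b := hb5 x h; have b' := hb1 x hx1; linarith [b.1, b'.1]⟩
  have hU2 : F \ f 2 '' F = f 0 '' F ∪ f 1 '' F ∪ f 3 '' F ∪ f 4 '' F ∪ f 5 '' F := by
    ext x
    constructor
    · rintro ⟨hxF, hxn⟩
      rcases hcases x hxF with h | h | h | h | h | h
      · exact Or.inl (Or.inl (Or.inl (Or.inl h)))
      · exact Or.inl (Or.inl (Or.inl (Or.inr h)))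
      · exact absurd h hxn
      · exact Or.inl (Or.inl (Or.inr h))
      · exact Or.inl (Or.inr h)
      · exact Or.inr h
    · intro hx
      rcases hx with ((((h | h) | h) | h) | h)
      · exact ⟨hsub 0 h, fun hx2 => by
          have b := hb0 x h; have b' := hb2 x hx2; linarith [b.1, b'.1]⟩
      · exact ⟨hsub 1 h, fun hx2 => by
          have b := hb1 x h; have b' := hb2 x hx2; linarith [b.2, b'.2]⟩
      · exact ⟨hsub 3 h, fun hx2 => by
          have b := hb3 x h; have b' := hb2 x hx2; linarith [b.1, b'.1]⟩
      · exact ⟨hsub 4 h, fun hx2 => by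
          have b := hb4 x h; have b' := hb2 x hx2; nlinarith [b.2.1, b'.1]⟩
      · exact ⟨hsub 5 h, fun hx2 => by
          have b := hb5 x h; have b' := hb2 x hx2; linarith [b.1, b'.1]⟩
  -- rewriting S 3 and S 5
  have hS3' : S 3 = f 3 '' (F \ f 1 '' F) := by
    rw [hS3, Set.image_comp, Set.image_diff hinj3]
  have hS5' : S 5 = f 5 '' (F \ f 2 '' F) := by
    rw [hS5, Set.image_comp, Set.image_diff hinj5]
  -- Part 1 : nonempty and compact
  have part1 : ∀ i, (S i).Nonempty ∧ IsCompact (S i) := by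
    intro i
    fin_cases i
    · show (S 0).Nonempty ∧ IsCompact (S 0)
      rw [hS0]; exact ⟨hFne.image _, hcpt 0⟩
    · show (S 1).Nonempty ∧ IsCompact (S 1)
      rw [hS1]; exact ⟨hFne.image _, hcpt 1⟩
    · show (S 2).Nonempty ∧ IsCompact (S 2)
      rw [hS2]; exact ⟨hFne.image _, hcpt 2⟩
    · show (S 3).Nonempty ∧ IsCompact (S 3)
      rw [hS3', hU1]
      constructor
      · refine Set.Nonempty.image _ ?_
        obtain ⟨p, hp⟩ := hFne
        exact ⟨f 0 p, Set.mem_union_left _ (Set.mem_union_left _ (Set.mem_union_left _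
          (Set.mem_union_left _ ⟨p, hp, rfl⟩)))⟩
      · exact (((((hcpt 0).union (hcpt 2)).union (hcpt 3)).union (hcpt 4)).union (hcpt 5)).image
          (hcont 3)
    · show (S 4).Nonempty ∧ IsCompact (S 4)
      rw [hS4]; exact ⟨hFne.image _, hcpt 4⟩
    · show (S 5).Nonempty ∧ IsCompact (S 5)
      rw [hS5', hU2]
      constructor
      · refine Set.Nonempty.image _ ?_
        obtain ⟨p, hp⟩ := hFne
        exact ⟨f 0 p, Set.mem_union_left _ (Set.mem_union_left _ (Set.mem_union_left _
          (Set.mem_union_left _ ⟨p, hp, rfl⟩)))⟩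
      · exact (((((hcpt 0).union (hcpt 1)).union (hcpt 3)).union (hcpt 4)).union (hcpt 5)).image
          (hcont 5)
  -- base disjointness facts on raw pieces
  have d01 : Disjoint (f 0 '' F) (f 1 '' F) := by
    rw [Set.disjoint_left]; intro x hx hx'
    have b := hb0 x hx; have b' := hb1 x hx'; linarith [b.1, b'.1]
  have d02 : Disjoint (f 0 '' F) (f 2 '' F) := by
    rw [Set.disjoint_left]; intro x hx hx'
    have b := hb0 x hx; have b' := hb2 x hx'; linarith [b.1, b'.1]
  have d03 : Disjoint (f 0 '' F) (f 3 '' F) := by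
    rw [Set.disjoint_left]; intro x hx hx'
    have b := hb0 x hx; have b' := hb3 x hx'; linarith [b.2.1, b'.2]
  have d04 : Disjoint (f 0 '' F) (f 4 '' F) := by
    rw [Set.disjoint_left]; intro x hx hx'
    have b := hb0 x hx; have b' := hb4 x hx'; nlinarith [b.2.1, b'.2.2.1]
  have d05 : Disjoint (f 0 '' F) (f 5 '' F) := by
    rw [Set.disjoint_left]; intro x hx hx'
    have b := hb0 x hx; have b' := hb5 x hx'; nlinarith [b.2.1, b'.2.1]
  have d12 : Disjoint (f 1 '' F) (f 2 '' F) := by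
    rw [Set.disjoint_left]; intro x hx hx'
    have b := hb1 x hx; have b' := hb2 x hx'; linarith [b.2, b'.2]
  have d13 : Disjoint (f 1 '' F) (f 3 '' F) := by
    rw [Set.disjoint_left]; intro x hx hx'
    have b := hb1 x hx; have b' := hb3 x hx'; linarith [b.1, b'.1]
  have d14 : Disjoint (f 1 '' F) (f 4 '' F) := by
    rw [Set.disjoint_left]; intro x hx hx'
    have b := hb1 x hx; have b' := hb4 x hx'; nlinarith [b.2, b'.2.2.1]
  have d15 : Disjoint (f 1 '' F) (f 5 '' F) := by
    rw [Set.disjoint_left]; intro x hx hx'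
    have b := hb1 x hx; have b' := hb5 x hx'; linarith [b.1, b'.1]
  have d23 : Disjoint (f 2 '' F) (f 3 '' F) := by
    rw [Set.disjoint_left]; intro x hx hx'
    have b := hb2 x hx; have b' := hb3 x hx'; linarith [b.1, b'.1]
  have d24 : Disjoint (f 2 '' F) (f 4 '' F) := by
    rw [Set.disjoint_left]; intro x hx hx'
    have b := hb2 x hx; have b' := hb4 x hx'; nlinarith [b.1, b'.2.1]
  have d25 : Disjoint (f 2 '' F) (f 5 '' F) := by
    rw [Set.disjoint_left]; intro x hx hx'
    have b := hb2 x hx; have b' := hb5 x hx'; linarith [b.1, b'.1]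
  have d35 : Disjoint (f 3 '' F) (f 5 '' F) := by
    rw [Set.disjoint_left]; intro x hx hx'
    have b := hb3 x hx; have b' := hb5 x hx'; nlinarith [b.2, b'.2.2]
  -- disjointness on the S pieces
  have D01 : Disjoint (S 0) (S 1) := by rw [hS0, hS1]; exact d01
  have D02 : Disjoint (S 0) (S 2) := by rw [hS0, hS2]; exact d02
  have D03 : Disjoint (S 0) (S 3) := by rw [hS0, hS3]; exact d03.mono_right Set.diff_subset
  have D04 : Disjoint (S 0) (S 4) := by rw [hS0, hS4]; exact d04
  have D05 : Disjoint (S 0) (S 5) := by rw [hS0, hS5]; exact d05.mono_right Set.diff_subset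
  have D12 : Disjoint (S 1) (S 2) := by rw [hS1, hS2]; exact d12
  have D13 : Disjoint (S 1) (S 3) := by rw [hS1, hS3]; exact d13.mono_right Set.diff_subset
  have D14 : Disjoint (S 1) (S 4) := by rw [hS1, hS4]; exact d14
  have D15 : Disjoint (S 1) (S 5) := by rw [hS1, hS5]; exact d15.mono_right Set.diff_subset
  have D23 : Disjoint (S 2) (S 3) := by rw [hS2, hS3]; exact d23.mono_right Set.diff_subset
  have D24 : Disjoint (S 2) (S 4) := by rw [hS2, hS4]; exact d24
  have D25 : Disjoint (S 2) (S 5) := by rw [hS2, hS5]; exact d25.mono_right Set.diff_subset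
  have D35 : Disjoint (S 3) (S 5) := by
    rw [hS3, hS5]
    exact (d35.mono_left Set.diff_subset).mono_right Set.diff_subset
  have D34 : Disjoint (S 3) (S 4) := by
    rw [hS3, hS4, Set.disjoint_left]
    rintro x ⟨hx3, hxn⟩ ⟨y, hy, hyx⟩
    obtain ⟨bx1, bx2⟩ := hb3 x hx3
    have e1 : l * y.1 + l * (1 - l) = x.1 := by rw [← hyx]; exact ((hc4 y).1).symm
    have e2 : l * y.2 + (1 - l) ^ 2 = x.2 := by rw [← hyx]; exact ((hc4 y).2).symm
    have hy1 : y.1 ≤ l := by nlinarith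
    have hy2 : 1 - l ≤ y.2 := by nlinarith
    obtain ⟨z, hz, hzy⟩ := hA ⟨hy, hy1, hy2⟩
    refine hxn ⟨z, hz, ?_⟩
    show f 3 (f 1 z) = x
    rw [hid1 z, hzy, hyx]
  have D45 : Disjoint (S 4) (S 5) := by
    rw [hS4, hS5, Set.disjoint_left]
    rintro x ⟨y, hy, hyx⟩ ⟨hx5, hxn⟩
    obtain ⟨bx1, bx2, bx3⟩ := hb5 x hx5
    have e1 : l * y.1 + l * (1 - l) = x.1 := by rw [← hyx]; exact ((hc4 y).1).symm
    have e2 : l * y.2 + (1 - l) ^ 2 = x.2 := by rw [← hyx]; exact ((hc4 y).2).symm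
    have hy1 : y.1 ≤ l := by nlinarith
    have hy2 : y.2 ≤ l := by nlinarith
    obtain ⟨z, hz, hzy⟩ := hB1 y hy hy1 hy2
    refine hxn ⟨z, hz, ?_⟩
    show f 5 (f 2 z) = x
    rw [hid2 z, hzy, hyx]
  have DD : ∀ i j : Fin 6, i ≠ j → Disjoint (S i) (S j) := by
    intro i j hij
    fin_cases i <;> fin_cases j <;>
      first
        | exact absurd rfl hij
        | exact D01 | exact D02 | exact D03 | exact D04 | exact D05
        | exact D12 | exact D13 | exact D14 | exact D15
        | exact D23 | exact D24 | exact D25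
        | exact D34 | exact D35 | exact D45
        | exact D01.symm | exact D02.symm | exact D03.symm | exact D04.symm | exact D05.symm
        | exact D12.symm | exact D13.symm | exact D14.symm | exact D15.symm
        | exact D23.symm | exact D24.symm | exact D25.symm
        | exact D34.symm | exact D35.symm | exact D45.symm
  refine ⟨part1, ?_, ?_⟩
  · intro i _ j _ hij
    exact DD i j hij
  · apply Set.Subset.antisymm
    · refine Set.iUnion_subset ?_
      intro i
      fin_cases i
      · show S 0 ⊆ F
        rw [hS0]; exact hsub 0
      · show S 1 ⊆ F
        rw [hS1]; exact hsub 1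
      · show S 2 ⊆ F
        rw [hS2]; exact hsub 2
      · show S 3 ⊆ F
        rw [hS3]; exact fun x hx => hsub 3 hx.1
      · show S 4 ⊆ F
        rw [hS4]; exact hsub 4
      · show S 5 ⊆ F
        rw [hS5]; exact fun x hx => hsub 5 hx.1
    · intro x hx
      rcases hcases x hx with h | h | h | h | h | h
      · exact Set.mem_iUnion.mpr ⟨0, by rw [hS0]; exact h⟩
      · exact Set.mem_iUnion.mpr ⟨1, by rw [hS1]; exact h⟩
      · exact Set.mem_iUnion.mpr ⟨2, by rw [hS2]; exact h⟩
      · by_cases hc' : x ∈ (f 3 ∘ f 1) '' F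
        · obtain ⟨z, hz, hzx⟩ := hc'
          refine Set.mem_iUnion.mpr ⟨4, ?_⟩
          rw [hS4]
          exact ⟨f 3 z, hsub 3 ⟨z, hz, rfl⟩, by rw [← hid1 z]; exact hzx⟩
        · exact Set.mem_iUnion.mpr ⟨3, by rw [hS3]; exact ⟨h, hc'⟩⟩
      · exact Set.mem_iUnion.mpr ⟨4, by rw [hS4]; exact h⟩
      · by_cases hc' : x ∈ (f 5 ∘ f 2) '' F
        · obtain ⟨z, hz, hzx⟩ := hc'
          refine Set.mem_iUnion.mpr ⟨4, ?_⟩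
          rw [hS4]
          exact ⟨f 0 z, hsub 0 ⟨z, hz, rfl⟩, by rw [← hid2 z]; exact hzx⟩
        · exact Set.mem_iUnion.mpr ⟨5, by rw [hS5]; exact ⟨h, hc'⟩⟩
end

section
/- Let 0 < λ < 1/7 and let F ⊆ ℝ be the attractor of the IFS f₁(x)=λx, f₂(x)=λx+2λ, f₃(x)=λx+3λ−λ², f₄(x)=λx+4λ−2λ², f₅(x)=λx+5λ, f₆(x)=λx+1−λ. Then f₂ ∘ f₆ = f₃ ∘ f₁ and f₄ ∘ f₁ = f₃ ∘ f₆ as maps on ℝ, and the sets f₁(F), f₅(F), f₆(F), f₂(F)∖(f₂∘f₆)(F), f₄(F)∖(f₄∘f₁)(F), f₃(F) are pairwise disjoint with union F. -/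
/-!
Every map sends `[0, 1]` into itself, so comparing the extreme points of `F` with their preimages
gives `F ⊆ [0, 1]`, and `fᵢ(F) ⊆ [tᵢ, tᵢ + λ]` where `tᵢ = fᵢ(0)`. For `λ < 1/7` these intervals are
disjoint, except that the one of `f₃` meets those of `f₂` and `f₄`. If `f₂(a) = f₃(b)` with
`a, b ∈ F`, then `b = a - (1 - λ) ≤ λ`; only `f₁(F)` meets `[0, λ]`, so `b ∈ f₁(F)` and the common
point lies in `f₃f₁(F) = f₂f₆(F)`. Symmetrically `f₄(a) = f₃(b)` forces `b ≥ 1 - λ`, hence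
`b ∈ f₆(F)` and the point lies in `f₃f₆(F) = f₄f₁(F)`.
-/

open Set

section SelfSimilar

variable {α ι : Type*} [LinearOrder α] [TopologicalSpace α]

theorem IsCompact.subset_Iic_of_subset_iUnion_image [ClosedIciTopology α] {F : Set α}
    (hF : IsCompact F) {f : ι → α → α} (hsub : F ⊆ ⋃ i, f i '' F) (hmono : ∀ i, Monotone (f i))
    {b : α} (hb : ∀ i x, b < x → f i x < x) : F ⊆ Iic b := by
  rcases F.eq_empty_or_nonempty with rfl | hne
  · exact empty_subset _
  obtain ⟨s, hsF, hs⟩ := hF.exists_isGreatest hne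
  obtain ⟨i, y, hyF, rfl⟩ := mem_iUnion.1 (hsub hsF)
  refine fun x hx => not_lt.1 fun hbx => ?_
  have hbs : b < f i y := hbx.trans_le (hs hx)
  exact (hmono i (hs hyF)).not_gt (hb i _ hbs)

theorem IsCompact.subset_Ici_of_subset_iUnion_image [ClosedIicTopology α] {F : Set α}
    (hF : IsCompact F) {f : ι → α → α} (hsub : F ⊆ ⋃ i, f i '' F) (hmono : ∀ i, Monotone (f i))
    {a : α} (ha : ∀ i x, x < a → x < f i x) : F ⊆ Ici a :=
  IsCompact.subset_Iic_of_subset_iUnion_image (α := αᵒᵈ) hF hsub (fun i => (hmono i).dual) ha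

end SelfSimilar

theorem IsCompact.subset_Icc_of_subset_iUnion_affine {ι : Type*} {F : Set ℝ} (hF : IsCompact F)
    {c : ℝ} {t : ι → ℝ} (hc0 : 0 ≤ c) (hc1 : c < 1) (ht0 : ∀ i, 0 ≤ t i) (ht1 : ∀ i, t i ≤ 1 - c)
    (hsub : F ⊆ ⋃ i, (fun x => c * x + t i) '' F) : F ⊆ Icc 0 1 := by
  have hmono : ∀ i, Monotone fun x => c * x + t i := fun i x y hxy => by
    dsimp only; gcongr
  intro x hx
  refine ⟨hF.subset_Ici_of_subset_iUnion_image hsub hmono (fun i x hx => ?_) hx,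
    hF.subset_Iic_of_subset_iUnion_image hsub hmono (fun i x hx => ?_) hx⟩
  · nlinarith [ht0 i]
  · nlinarith [ht1 i]

theorem image_affine_subset_Icc {F : Set ℝ} (hF : F ⊆ Icc 0 1) {c : ℝ} (hc : 0 ≤ c) (t : ℝ) :
    (fun x => c * x + t) '' F ⊆ Icc t (c + t) := by
  rintro _ ⟨x, hx, rfl⟩
  obtain ⟨hx0, hx1⟩ := hF hx
  constructor <;> nlinarith

theorem disjoint_Icc_Icc_of_lt {a b c d : ℝ} (h : b < c) : Disjoint (Icc a b) (Icc c d) :=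
  (Ici_disjoint_Iic.2 h.not_ge).symm.mono Icc_subset_Iic_self Icc_subset_Ici_self

theorem inter_subset_image_of_disjoint {ι α : Type*} {F A : Set α} {g : ι → α → α}
    (hsub : F ⊆ ⋃ i, g i '' F) {i₀ : ι} (hA : ∀ i ≠ i₀, Disjoint (g i '' F) A) :
    F ∩ A ⊆ g i₀ '' F := by
  rintro x ⟨hxF, hxA⟩
  obtain ⟨i, hi⟩ := mem_iUnion.1 (hsub hxF)
  by_cases h : i = i₀
  · exact h ▸ hi
  · exact absurd hxA (disjoint_left.1 (hA i h) hi)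

theorem disjoint_image_diff_image_comp {α β : Type*} {F : Set α} {g h : α → β} {k : α → α}
    (H : ∀ a ∈ F, ∀ b ∈ F, g a = h b → b ∈ k '' F) : Disjoint (g '' F \ (h ∘ k) '' F) (h '' F) := by
  rw [disjoint_left]
  rintro _ ⟨⟨a, ha, rfl⟩, hnot⟩ ⟨b, hb, hab⟩
  obtain ⟨c, hc, rfl⟩ := H a ha b hb hab.symm
  exact hnot ⟨c, hc, hab⟩

def lineShift (l : ℝ) : Fin 6 → ℝ := ![0, 2 * l, 3 * l - l ^ 2, 4 * l - 2 * l ^ 2, 5 * l, 1 - l]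

/-- The paper's `f_{i+1}`; indices are shifted to start at `0`, as in `Fin 6`. -/
def lineIFS (l : ℝ) (i : Fin 6) (x : ℝ) : ℝ := l * x + lineShift l i

def linePieces (l : ℝ) (F : Set ℝ) : Fin 6 → Set ℝ :=
  ![lineIFS l 0 '' F, lineIFS l 4 '' F, lineIFS l 5 '' F,
    lineIFS l 1 '' F \ (lineIFS l 1 ∘ lineIFS l 5) '' F,
    lineIFS l 3 '' F \ (lineIFS l 3 ∘ lineIFS l 0) '' F,
    lineIFS l 2 '' F]

namespace lineIFS

variable {l : ℝ} {F : Set ℝ}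

theorem one_comp_five : lineIFS l 1 ∘ lineIFS l 5 = lineIFS l 2 ∘ lineIFS l 0 := by
  funext x
  simp only [Function.comp_apply, lineIFS, lineShift, Matrix.cons_val, Matrix.cons_val_one,
    Matrix.cons_val_zero]
  ring

theorem three_comp_zero : lineIFS l 3 ∘ lineIFS l 0 = lineIFS l 2 ∘ lineIFS l 5 := by
  funext x
  simp only [Function.comp_apply, lineIFS, lineShift, Matrix.cons_val, Matrix.cons_val_zero]
  ring

theorem subset_Icc_zero_one (hl0 : 0 < l) (hl7 : l < 1 / 7) (hFc : IsCompact F)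
    (hF : F ⊆ ⋃ i, lineIFS l i '' F) : F ⊆ Icc 0 1 :=
  hFc.subset_Icc_of_subset_iUnion_affine hl0.le (by linarith)
    (fun i => by fin_cases i <;> simp [lineShift] <;> nlinarith)
    (fun i => by fin_cases i <;> simp [lineShift] <;> nlinarith) hF

theorem image_subset_Icc (hl0 : 0 < l) (hF01 : F ⊆ Icc 0 1) (i : Fin 6) :
    lineIFS l i '' F ⊆ Icc (lineShift l i) (l + lineShift l i) :=
  image_affine_subset_Icc hF01 hl0.le _

theorem inter_Iic_subset_image_zero (hl0 : 0 < l) (hl7 : l < 1 / 7) (hF01 : F ⊆ Icc 0 1)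
    (hF : F ⊆ ⋃ i, lineIFS l i '' F) : F ∩ Iic l ⊆ lineIFS l 0 '' F := by
  refine inter_subset_image_of_disjoint hF fun i hi => ?_
  refine (Ici_disjoint_Iic.2 (not_le.2 ?_)).mono_left
    ((image_subset_Icc hl0 hF01 i).trans Icc_subset_Ici_self)
  fin_cases i <;> simp [lineShift] at hi ⊢ <;> nlinarith

theorem inter_Ici_subset_image_five (hl0 : 0 < l) (hl7 : l < 1 / 7) (hF01 : F ⊆ Icc 0 1)
    (hF : F ⊆ ⋃ i, lineIFS l i '' F) : F ∩ Ici (1 - l) ⊆ lineIFS l 5 '' F := by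
  refine inter_subset_image_of_disjoint hF fun i hi => ?_
  refine (Ici_disjoint_Iic.2 (not_le.2 ?_)).symm.mono_left
    ((image_subset_Icc hl0 hF01 i).trans Icc_subset_Iic_self)
  fin_cases i <;> simp [lineShift] at hi ⊢ <;> nlinarith

theorem disjoint_pieces_three_five (hl0 : 0 < l) (hl7 : l < 1 / 7) (hF01 : F ⊆ Icc 0 1)
    (hF : F ⊆ ⋃ i, lineIFS l i '' F) : Disjoint (linePieces l F 3) (linePieces l F 5) := by
  change Disjoint (_ \ (lineIFS l 1 ∘ lineIFS l 5) '' F) _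
  rw [one_comp_five]
  refine disjoint_image_diff_image_comp fun a ha b hb hab => ?_
  have hb_le : b ≤ l := by
    simp only [lineIFS, lineShift, Matrix.cons_val, Matrix.cons_val_one] at hab
    nlinarith [(hF01 ha).2]
  exact inter_Iic_subset_image_zero hl0 hl7 hF01 hF ⟨hb, hb_le⟩

theorem disjoint_pieces_four_five (hl0 : 0 < l) (hl7 : l < 1 / 7) (hF01 : F ⊆ Icc 0 1)
    (hF : F ⊆ ⋃ i, lineIFS l i '' F) : Disjoint (linePieces l F 4) (linePieces l F 5) := by
  change Disjoint (_ \ (lineIFS l 3 ∘ lineIFS l 0) '' F) _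
  rw [three_comp_zero]
  refine disjoint_image_diff_image_comp fun a ha b hb hab => ?_
  have hb_ge : 1 - l ≤ b := by
    simp only [lineIFS, lineShift, Matrix.cons_val] at hab
    nlinarith [(hF01 ha).1]
  exact inter_Ici_subset_image_five hl0 hl7 hF01 hF ⟨hb, hb_ge⟩

theorem pieces_subset_image (i : Fin 6) :
    linePieces l F i ⊆ lineIFS l (![0, 4, 5, 1, 3, 2] i) '' F := by
  fin_cases i <;> simp [linePieces]

theorem pairwiseDisjoint_pieces (hl0 : 0 < l) (hl7 : l < 1 / 7) (hFc : IsCompact F)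
    (hF : F ⊆ ⋃ i, lineIFS l i '' F) : (univ : Set (Fin 6)).PairwiseDisjoint (linePieces l F) := by
  have hF01 := subset_Icc_zero_one hl0 hl7 hFc hF
  have hI : ∀ i, linePieces l F i ⊆ Icc (lineShift l (![0, 4, 5, 1, 3, 2] i))
      (l + lineShift l (![0, 4, 5, 1, 3, 2] i)) := fun i =>
    (pieces_subset_image i).trans (image_subset_Icc hl0 hF01 _)
  rw [PairwiseDisjoint, pairwise_univ, pairwise_disjoint_on]
  intro i j hij
  fin_cases i <;> fin_cases j <;> simp at hij
  all_goals first
    | exact disjoint_pieces_three_five hl0 hl7 hF01 hF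
    | exact disjoint_pieces_four_five hl0 hl7 hF01 hF
    | exact (disjoint_Icc_Icc_of_lt (by simp [lineShift]; nlinarith)).mono (hI _) (hI _)
    | exact (disjoint_Icc_Icc_of_lt (by simp [lineShift]; nlinarith)).symm.mono (hI _) (hI _)

theorem iUnion_pieces (hF : F = ⋃ i, lineIFS l i '' F) : ⋃ i, linePieces l F i = F := by
  have himage : ∀ i, lineIFS l i '' F ⊆ F := fun i =>
    (subset_iUnion (fun i => lineIFS l i '' F) i).trans hF.symm.subset
  have hcomp : ∀ i j, (lineIFS l i ∘ lineIFS l j) '' F ⊆ lineIFS l i '' F := fun i j =>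
    (image_comp _ _ F).subset.trans (image_mono (himage j))
  have hpiece : ∀ i, linePieces l F i ⊆ ⋃ j, linePieces l F j := subset_iUnion _
  refine ((iUnion_subset fun i => (pieces_subset_image i).trans
    (subset_iUnion (fun j => lineIFS l j '' F) _)).antisymm
    (iUnion_subset fun i => ?_)).trans hF.symm
  fin_cases i
  · exact hpiece 0
  · refine (subset_sdiff_union _ ((lineIFS l 1 ∘ lineIFS l 5) '' F)).trans
      (union_subset (hpiece 3) ?_)
    exact one_comp_five (l := l) ▸ (hcomp 2 0).trans (hpiece 5)
  · exact hpiece 5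
  · refine (subset_sdiff_union _ ((lineIFS l 3 ∘ lineIFS l 0) '' F)).trans
      (union_subset (hpiece 4) ?_)
    exact three_comp_zero (l := l) ▸ (hcomp 2 5).trans (hpiece 5)
  · exact hpiece 1
  · exact hpiece 2

end lineIFS

theorem line_example_structure_general
    (l : ℝ) (hl : 0 < l ∧ l < 1 / 7)
    (f : Fin 6 → ℝ → ℝ)
    (hf : f = ![fun x => l * x,
                fun x => l * x + 2 * l,
                fun x => l * x + 3 * l - l ^ 2,
                fun x => l * x + 4 * l - 2 * l ^ 2,
                fun x => l * x + 5 * l,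
                fun x => l * x + 1 - l])
    (F : Set ℝ) (hFc : IsCompact F)
    (hFeq : F = ⋃ i : Fin 6, f i '' F)
    (S : Fin 6 → Set ℝ)
    (hS : S = ![f 0 '' F, f 4 '' F, f 5 '' F,
                f 1 '' F \ (f 1 ∘ f 5) '' F,
                f 3 '' F \ (f 3 ∘ f 0) '' F,
                f 2 '' F]) :
    f 1 ∘ f 5 = f 2 ∘ f 0 ∧ f 3 ∘ f 0 = f 2 ∘ f 5 ∧
    (Set.univ : Set (Fin 6)).PairwiseDisjoint S ∧ ⋃ i, S i = F := by
  obtain ⟨hl0, hl7⟩ := hl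
  obtain rfl : f = lineIFS l := by
    subst hf
    funext i x
    fin_cases i <;> simp [lineIFS, lineShift] <;> ring
  subst hS
  exact ⟨lineIFS.one_comp_five, lineIFS.three_comp_zero,
    lineIFS.pairwiseDisjoint_pieces hl0 hl7 hFc hFeq.subset, lineIFS.iUnion_pieces hFeq⟩

theorem line_example_structure
    (l : ℝ) (hl : 0 < l ∧ l < 1 / 7)
    (f : Fin 6 → ℝ → ℝ)
    (hf : f = ![fun x => l * x,
                fun x => l * x + 2 * l,
                fun x => l * x + 3 * l - l ^ 2,
                fun x => l * x + 4 * l - 2 * l ^ 2,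
                fun x => l * x + 5 * l,
                fun x => l * x + 1 - l])
    (F : Set ℝ) (hFne : F.Nonempty) (hFc : IsCompact F)
    (hFeq : F = ⋃ i : Fin 6, f i '' F)
    (S : Fin 6 → Set ℝ)
    (hS : S = ![f 0 '' F, f 4 '' F, f 5 '' F,
                f 1 '' F \ (f 1 ∘ f 5) '' F,
                f 3 '' F \ (f 3 ∘ f 0) '' F,
                f 2 '' F]) :
    f 1 ∘ f 5 = f 2 ∘ f 0 ∧ f 3 ∘ f 0 = f 2 ∘ f 5 ∧
    (Set.univ : Set (Fin 6)).PairwiseDisjoint S ∧ ⋃ i, S i = F :=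
  line_example_structure_general l hl f hf F hFc hFeq S hS
end

section
/- Corollary: Under the hypotheses of the main theorem (a, b ∈ A_{k₁,…,k_n} with #γ_ℓ(a) = #γ_ℓ(b) for all ℓ), the Hausdorff dimensions of K_a and K_b coincide. -/
/-- Conditions (I), (II), (III) for a translation vector `a` (indexed `1,…,m`) to belong
to the class `𝔸_{k₁,…,k_n}`, for the homogeneous IFS `{x ↦ l·x + a i}` with ratio `l`. -/
def MemClassA (l : ℝ) (m n : ℕ) (k : ℕ → ℕ) (a : ℕ → ℝ) : Prop :=
  -- (I)
  (a 1 = 0 ∧ a m = 1 - l ∧ StrictMonoOn a (Set.Icc 1 m)) ∧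
  -- (II): no three of the intervals `f i [0,1] = [a i, a i + l]` intersect
  (∀ i j t, i ∈ Set.Icc 1 m → j ∈ Set.Icc 1 m → t ∈ Set.Icc 1 m →
    i ≠ j → j ≠ t → i ≠ t →
    Set.Icc (a i) (a i + l) ∩ Set.Icc (a j) (a j + l) ∩ Set.Icc (a t) (a t + l) = ∅) ∧
  -- (II): nonempty pairwise intersections have length `l ^ k ℓ` for some `1 ≤ ℓ ≤ n`
  (∀ i j, i ∈ Set.Icc 1 m → j ∈ Set.Icc 1 m → i < j →
    (Set.Icc (a i) (a i + l) ∩ Set.Icc (a j) (a j + l)).Nonempty →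
    ∃ ℓ ∈ Set.Icc 1 n, a i + l - a j = l ^ k ℓ) ∧
  -- (III)
  ((∀ j, 1 < j → j ≤ m → Set.Icc (a 1) (a 1 + l) ∩ Set.Icc (a j) (a j + l) = ∅) ∨
   (∀ j, 1 ≤ j → j < m → Set.Icc (a m) (a m + l) ∩ Set.Icc (a j) (a j + l) = ∅))

/-- `γ ℓ (a)`: indices `i` such that `f i [0,1]` and `f (i+1) [0,1]` overlap in an
interval of length `l ^ k ℓ`. -/
def gammaSet (l : ℝ) (m : ℕ) (k : ℕ → ℕ) (a : ℕ → ℝ) (ℓ : ℕ) : Set ℕ :=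
  {i | i ∈ Set.Icc 1 (m - 1) ∧ a i + l - a (i + 1) = l ^ k ℓ}

/-!
After conjugating by `x ↦ 1 - x` we may assume that the first piece `[0, l]` meets no other
piece. Every point of `K_a` has a lexicographically least code, and such a code contains no block
`(i + 1) 1^K` where the pieces `i` and `i + 1` overlap by `l ^ (K + 1)`, since that block codes
the same points as the smaller block `i m^K`. Codes avoiding these blocks are separated: if two of
them first differ at position `p`, their points are at distance at least `c * l ^ p`. As
`#γ_ℓ(a) = #γ_ℓ(b)`, a permutation `ρ` of the letters fixing `1` matches the overlap lengths of
`a` with those of `b`, and `x ↦ π_b (ρ ∘ code_a x)` is a Lipschitz map from `K_a` onto `K_b`.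
By symmetry the two dimensions agree.
-/

namespace HomogeneousIFS

open Set Filter Topology
open scoped Finset

lemma exists_pos_forall_of_finite {ι : Type*} {s : Set ι} (hs : s.Finite) {P : ι → ℝ → Prop}
    (hP : ∀ i c c', c' ≤ c → P i c → P i c') (h : ∀ i ∈ s, ∃ c > 0, P i c) :
    ∃ c > 0, ∀ i ∈ s, P i c := by
  have hev : ∀ᶠ c in 𝓝[>] (0 : ℝ), ∀ i ∈ s, P i c := by
    refine (eventually_all_finite hs).2 fun i hi => ?_
    obtain ⟨c, hc, hPc⟩ := h i hi
    filter_upwards [Ioc_mem_nhdsGT hc] with c' hc' using hP i c c' hc'.2 hPc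
  obtain ⟨c, hPc, hc⟩ := (hev.and self_mem_nhdsWithin).exists
  exact ⟨c, hc, hPc⟩

lemma exists_first_ne {ω τ : ℕ → ℕ} (h : ω ≠ τ) : ∃ p, (∀ q < p, ω q = τ q) ∧ ω p ≠ τ p := by
  classical
  have hex : ∃ p, ω p ≠ τ p := Function.ne_iff.1 h
  exact ⟨Nat.find hex, fun q hq => not_not.1 (Nat.find_min hex hq), Nat.find_spec hex⟩

lemma card_filter_eq_of_forall_ne {α β : Type*} [DecidableEq β] (s : Finset α) (f g : α → β)
    (c₀ : β) (h : ∀ c ≠ c₀, #{x ∈ s | f x = c} = #{x ∈ s | g x = c}) :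
    #{x ∈ s | f x = c₀} = #{x ∈ s | g x = c₀} := by
  set t := insert c₀ (s.image f ∪ s.image g)
  have hf := Finset.card_eq_sum_card_fiberwise (s := s) (f := f) (t := t) fun x hx =>
    Finset.mem_insert_of_mem (Finset.mem_union_left _ (Finset.mem_image_of_mem f hx))
  have hg := Finset.card_eq_sum_card_fiberwise (s := s) (f := g) (t := t) fun x hx =>
    Finset.mem_insert_of_mem (Finset.mem_union_right _ (Finset.mem_image_of_mem g hx))
  rw [← Finset.add_sum_erase t _ (Finset.mem_insert_self _ _)] at hf hg
  rw [Finset.sum_congr rfl fun c hc => h c (Finset.ne_of_mem_erase hc)] at hf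
  omega

lemma exists_perm_of_card_filter_eq {α β : Type*} [DecidableEq α] [DecidableEq β] (s : Finset α)
    (f g : α → β) (c₀ : β) (h : ∀ c ≠ c₀, #{x ∈ s | f x = c} = #{x ∈ s | g x = c}) :
    ∃ σ : Equiv.Perm α, (∀ x ∈ s, σ x ∈ s ∧ g (σ x) = f x) ∧ ∀ x ∉ s, σ x = x := by
  have hcard : ∀ (φ : α → β) c, Fintype.card {x : s // φ x = c} = #{x ∈ s | φ x = c} :=
    fun φ c => by
      rw [← Fintype.card_coe]
      exact Fintype.card_congr ((Equiv.subtypeSubtypeEquivSubtypeInter (· ∈ s) (φ · = c)).trans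
        (Equiv.subtypeEquivRight (by simp)))
  have hfiber : ∀ c, Fintype.card {x : s // f x = c} = Fintype.card {x : s // g x = c} := by
    intro c
    rw [hcard, hcard]
    by_cases hc : c = c₀
    · exact hc ▸ card_filter_eq_of_forall_ne s f g c₀ h
    · exact h c hc
  set e : s ≃ s := Equiv.ofFiberEquiv (f := fun x : s => f x) (g := fun x : s => g x)
    fun c => Fintype.equivOfCardEq (hfiber c)
  refine ⟨Equiv.Perm.ofSubtype e, fun x hx => ?_,
    fun x hx => Equiv.Perm.ofSubtype_apply_of_not_mem e hx⟩
  rw [Equiv.Perm.ofSubtype_apply_of_mem e hx]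
  exact ⟨(e _).2, Equiv.ofFiberEquiv_map (f := fun x : s => f x) (g := fun x : s => g x) _ _⟩

section Coding

variable {l : ℝ} {m : ℕ} {a : ℕ → ℝ} {ω τ : ℕ → ℕ}

def codeSet (m : ℕ) : Set (ℕ → ℕ) := {ω | ∀ j, ω j ∈ Icc 1 m}

noncomputable def proj (l : ℝ) (a : ℕ → ℝ) (ω : ℕ → ℕ) : ℝ := ∑' j, a (ω j) * l ^ j

lemma shift_mem_codeSet (hω : ω ∈ codeSet m) : (fun j => ω (j + 1)) ∈ codeSet m :=
  fun j => hω (j + 1)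

lemma exists_norm_term_le (hl0 : 0 ≤ l) (m : ℕ) (a : ℕ → ℝ) :
    ∃ M, ∀ ω ∈ codeSet m, ∀ j, ‖a (ω j) * l ^ j‖ ≤ M * l ^ j := by
  obtain ⟨M, hM⟩ := ((finite_Icc 1 m).image fun i => |a i|).bddAbove
  refine ⟨M, fun ω hω j => ?_⟩
  rw [norm_mul, norm_pow, Real.norm_eq_abs, Real.norm_eq_abs, abs_of_nonneg hl0]
  exact mul_le_mul_of_nonneg_right (hM ⟨ω j, hω j, rfl⟩) (by positivity)

lemma summable_proj (hl0 : 0 ≤ l) (hl1 : l < 1) (hω : ω ∈ codeSet m) :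
    Summable fun j => a (ω j) * l ^ j := by
  obtain ⟨M, hM⟩ := exists_norm_term_le hl0 m a
  exact .of_norm_bounded ((summable_geometric_of_lt_one hl0 hl1).mul_left M) (hM ω hω)

lemma exists_abs_proj_le (hl0 : 0 ≤ l) (hl1 : l < 1) (m : ℕ) (a : ℕ → ℝ) :
    ∃ R, ∀ ω ∈ codeSet m, |proj l a ω| ≤ R := by
  obtain ⟨M, hM⟩ := exists_norm_term_le hl0 m a
  exact ⟨M * (1 - l)⁻¹, fun ω hω =>
    tsum_of_norm_bounded ((hasSum_geometric_of_lt_one hl0 hl1).mul_left M) (hM ω hω)⟩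

lemma proj_eq_add (hl0 : 0 ≤ l) (hl1 : l < 1) (hω : ω ∈ codeSet m) :
    proj l a ω = a (ω 0) + l * proj l a (fun j => ω (j + 1)) := by
  rw [proj, (summable_proj hl0 hl1 hω).tsum_eq_zero_add, proj, ← tsum_mul_left]
  simp only [pow_zero, mul_one, pow_succ]
  congr 1
  exact tsum_congr fun j => by ring

lemma tendsto_sum_add_pow_mul (hl0 : 0 ≤ l) (hl1 : l < 1) (hω : ω ∈ codeSet m)
    {y : ℕ → ℝ} {R : ℝ} (hy : ∀ N, |y N| ≤ R) :
    Tendsto (fun N => ∑ j ∈ Finset.range N, a (ω j) * l ^ j + l ^ N * y N) atTop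
      (𝓝 (proj l a ω)) := by
  have htail : Tendsto (fun N => l ^ N * y N) atTop (𝓝 0) := by
    refine squeeze_zero_norm (fun N => ?_)
      (by simpa using (tendsto_pow_atTop_nhds_zero_of_lt_one hl0 hl1).mul_const R)
    rw [norm_mul, norm_pow, Real.norm_eq_abs, Real.norm_eq_abs, abs_of_nonneg hl0]
    exact mul_le_mul_of_nonneg_left (hy N) (by positivity)
  simpa [proj] using (summable_proj hl0 hl1 hω).hasSum.tendsto_sum_nat.add htail

lemma proj_eq_of_eq_mul_add (hl0 : 0 ≤ l) (hl1 : l < 1) (hω : ω ∈ codeSet m)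
    {y : ℕ → ℝ} {R : ℝ} (hy : ∀ N, |y N| ≤ R) (hrec : ∀ N, y N = l * y (N + 1) + a (ω N)) :
    proj l a ω = y 0 := by
  have hpartial : ∀ N, ∑ j ∈ Finset.range N, a (ω j) * l ^ j + l ^ N * y N = y 0 := by
    intro N
    induction N with
    | zero => simp
    | succ N ih => rw [← ih, Finset.sum_range_succ, hrec N, pow_succ]; ring
  exact tendsto_nhds_unique (tendsto_sum_add_pow_mul hl0 hl1 hω hy)
    (by simp only [hpartial]; exact tendsto_const_nhds)

lemma mem_codeSet_and_proj_eq_of_decomposition (hl0 : 0 ≤ l) (hl1 : l < 1) {S : Set ℝ} {R : ℝ}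
    (hS : ∀ z ∈ S, |z| ≤ R) {next : ℝ → ℝ} {first : ℝ → ℕ} (hnext : MapsTo next S S)
    (hfirst : ∀ z ∈ S, first z ∈ Icc 1 m) (hrec : ∀ z ∈ S, z = l * next z + a (first z))
    {x : ℝ} (hx : x ∈ S) :
    (fun j => first (next^[j] x)) ∈ codeSet m ∧ proj l a (fun j => first (next^[j] x)) = x := by
  have hiter : ∀ j, next^[j] x ∈ S := fun j => hnext.iterate j hx
  have hcode : (fun j => first (next^[j] x)) ∈ codeSet m := fun j => hfirst _ (hiter j)
  refine ⟨hcode, proj_eq_of_eq_mul_add hl0 hl1 hcode (fun N => hS _ (hiter N)) fun N => ?_⟩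
  rw [Function.iterate_succ_apply']
  exact hrec _ (hiter N)

lemma proj_mem_Icc (hl0 : 0 ≤ l) (hl1 : l < 1) (ha : MapsTo a (Icc 1 m) (Icc 0 (1 - l)))
    (hω : ω ∈ codeSet m) : proj l a ω ∈ Icc 0 1 := by
  have hterm : ∀ j, a (ω j) * l ^ j ∈ Icc 0 ((1 - l) * l ^ j) := fun j =>
    ⟨mul_nonneg (ha (hω j)).1 (by positivity),
      mul_le_mul_of_nonneg_right (ha (hω j)).2 (by positivity)⟩
  refine ⟨tsum_nonneg fun j => (hterm j).1, ?_⟩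
  calc proj l a ω ≤ ∑' j, (1 - l) * l ^ j :=
        (summable_proj hl0 hl1 hω).tsum_le_tsum (fun j => (hterm j).2)
          ((summable_geometric_of_lt_one hl0 hl1).mul_left _)
    _ = 1 := by
        rw [tsum_mul_left, tsum_geometric_of_lt_one hl0 hl1, mul_inv_cancel₀ (by linarith)]

lemma mul_pow_le_proj (hl0 : 0 ≤ l) (hl1 : l < 1) (ha : MapsTo a (Icc 1 m) (Icc 0 (1 - l)))
    (hω : ω ∈ codeSet m) (s : ℕ) : a (ω s) * l ^ s ≤ proj l a ω :=
  (summable_proj hl0 hl1 hω).le_tsum s fun j _ => mul_nonneg (ha (hω j)).1 (by positivity)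

lemma proj_sub_proj_ge (hl0 : 0 ≤ l) (hl1 : l < 1) (ha : MapsTo a (Icc 1 m) (Icc 0 (1 - l)))
    (hω : ω ∈ codeSet m) (hτ : τ ∈ codeSet m) :
    a (τ 0) - a (ω 0) - l + l * proj l a (fun j => τ (j + 1)) ≤ proj l a τ - proj l a ω := by
  have h := mul_le_mul_of_nonneg_left (proj_mem_Icc hl0 hl1 ha (shift_mem_codeSet hω)).2 hl0
  rw [proj_eq_add hl0 hl1 hω, proj_eq_add hl0 hl1 hτ]
  linarith

lemma abs_proj_sub_proj_le (hl0 : 0 ≤ l) (hl1 : l < 1)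
    (ha : MapsTo a (Icc 1 m) (Icc 0 (1 - l))) (p : ℕ) :
    ∀ ω ∈ codeSet m, ∀ τ ∈ codeSet m, (∀ q < p, ω q = τ q) →
      |proj l a ω - proj l a τ| ≤ l ^ p := by
  induction p with
  | zero =>
    intro ω hω τ hτ _
    have h1 := proj_mem_Icc hl0 hl1 ha hω
    have h2 := proj_mem_Icc hl0 hl1 ha hτ
    rw [pow_zero, abs_le]
    constructor <;> linarith [h1.1, h1.2, h2.1, h2.2]
  | succ p ih =>
    intro ω hω τ hτ hagree
    have hsh := ih _ (shift_mem_codeSet hω) _ (shift_mem_codeSet hτ)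
      fun q hq => hagree (q + 1) (by omega)
    rw [proj_eq_add hl0 hl1 hω, proj_eq_add hl0 hl1 hτ, hagree 0 (by omega),
      add_sub_add_left_eq_sub, ← mul_sub, abs_mul, abs_of_nonneg hl0, pow_succ']
    exact mul_le_mul_of_nonneg_left hsh hl0

lemma proj_sub_proj_eq_sum (hl0 : 0 ≤ l) (hl1 : l < 1) (hω : ω ∈ codeSet m)
    (hτ : τ ∈ codeSet m) {s : Finset ℕ} (hs : ∀ j ∉ s, ω j = τ j) :
    proj l a ω - proj l a τ = ∑ j ∈ s, (a (ω j) - a (τ j)) * l ^ j := by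
  rw [proj, proj, ← (summable_proj hl0 hl1 hω).tsum_sub (summable_proj hl0 hl1 hτ)]
  rw [tsum_eq_sum fun j hj => by rw [hs j hj, sub_self]]
  exact Finset.sum_congr rfl fun j _ => by ring

end Coding

section Attractor

variable {l : ℝ} {m : ℕ} {a : ℕ → ℝ} {K : Set ℝ}

structure IsIFSAttractor (l : ℝ) (m : ℕ) (a : ℕ → ℝ) (K : Set ℝ) : Prop where
  nonempty : K.Nonempty
  isCompact : IsCompact K
  eq_biUnion : K = ⋃ i ∈ Icc 1 m, (fun x => l * x + a i) '' K

lemma IsIFSAttractor.exists_abs_le (hK : IsIFSAttractor l m a K) : ∃ R, ∀ z ∈ K, |z| ≤ R :=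
  hK.isCompact.isBounded.exists_norm_le

lemma IsIFSAttractor.sum_add_pow_mul_mem (hK : IsIFSAttractor l m a K) {ω : ℕ → ℕ}
    (hω : ω ∈ codeSet m) (N : ℕ) :
    ∀ z ∈ K, ∑ j ∈ Finset.range N, a (ω j) * l ^ j + l ^ N * z ∈ K := by
  induction N with
  | zero => simp
  | succ N ih =>
    intro z hz
    have hmap : l * z + a (ω N) ∈ K := by
      rw [hK.eq_biUnion]
      exact mem_biUnion (hω N) ⟨z, hz, rfl⟩
    convert ih _ hmap using 1
    rw [Finset.sum_range_succ, pow_succ]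
    ring

lemma IsIFSAttractor.eq_image_proj (hl0 : 0 ≤ l) (hl1 : l < 1) (hK : IsIFSAttractor l m a K) :
    K = proj l a '' codeSet m := by
  obtain ⟨R, hR⟩ := hK.exists_abs_le
  apply Subset.antisymm
  · have hdecomp : ∀ z ∈ K, ∃ i w, i ∈ Icc 1 m ∧ w ∈ K ∧ z = l * w + a i := by
      intro z hz
      rw [hK.eq_biUnion] at hz
      simp only [mem_iUnion, mem_image] at hz
      obtain ⟨i, hi, w, hw, rfl⟩ := hz
      exact ⟨i, w, hi, hw, rfl⟩
    choose! first next hfirst hnext hrec using hdecomp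
    intro x hx
    exact ⟨_, mem_codeSet_and_proj_eq_of_decomposition hl0 hl1 hR hnext hfirst hrec hx⟩
  · rintro _ ⟨ω, hω, rfl⟩
    obtain ⟨z, hz⟩ := hK.nonempty
    exact hK.isCompact.isClosed.mem_of_tendsto
      (tendsto_sum_add_pow_mul hl0 hl1 hω (y := fun _ => z) (R := |z|) fun _ => le_rfl)
      (Eventually.of_forall fun N => hK.sum_add_pow_mul_mem hω N z hz)

end Attractor

section Canonical

variable {l : ℝ} {m : ℕ} {a : ℕ → ℝ} {ω : ℕ → ℕ} {x : ℝ}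

noncomputable def firstLetter (l : ℝ) (m : ℕ) (a : ℕ → ℝ) (x : ℝ) : ℕ :=
  sInf {i | ∃ ω ∈ codeSet m, proj l a ω = x ∧ ω 0 = i}

noncomputable def tailPoint (l : ℝ) (m : ℕ) (a : ℕ → ℝ) (x : ℝ) : ℝ :=
  (x - a (firstLetter l m a x)) / l

/-- The lexicographically least code of `x`, chosen greedily letter by letter. -/
noncomputable def canonCode (l : ℝ) (m : ℕ) (a : ℕ → ℝ) (x : ℝ) : ℕ → ℕ :=
  fun j => firstLetter l m a ((tailPoint l m a)^[j] x)

lemma exists_code_firstLetter (hx : x ∈ proj l a '' codeSet m) :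
    ∃ ω ∈ codeSet m, proj l a ω = x ∧ ω 0 = firstLetter l m a x := by
  obtain ⟨ω, hω, rfl⟩ := hx
  have hne : {i | ∃ τ ∈ codeSet m, proj l a τ = proj l a ω ∧ τ 0 = i}.Nonempty :=
    ⟨ω 0, ω, hω, rfl, rfl⟩
  exact Nat.sInf_mem hne

lemma firstLetter_le (hω : ω ∈ codeSet m) : firstLetter l m a (proj l a ω) ≤ ω 0 :=
  Nat.sInf_le ⟨ω, hω, rfl, rfl⟩

lemma proj_shift_eq_tailPoint (hl0 : 0 < l) (hl1 : l < 1) (hω : ω ∈ codeSet m)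
    (h0 : ω 0 = firstLetter l m a (proj l a ω)) :
    proj l a (fun j => ω (j + 1)) = tailPoint l m a (proj l a ω) := by
  rw [tailPoint, ← h0, eq_div_iff hl0.ne', proj_eq_add hl0.le hl1 hω]
  ring

lemma mapsTo_tailPoint (hl0 : 0 < l) (hl1 : l < 1) :
    MapsTo (tailPoint l m a) (proj l a '' codeSet m) (proj l a '' codeSet m) := by
  intro x hx
  obtain ⟨ω, hω, rfl, h0⟩ := exists_code_firstLetter hx
  exact ⟨_, shift_mem_codeSet hω, proj_shift_eq_tailPoint hl0 hl1 hω h0⟩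

lemma canonCode_spec (hl0 : 0 < l) (hl1 : l < 1) (hx : x ∈ proj l a '' codeSet m) :
    canonCode l m a x ∈ codeSet m ∧ proj l a (canonCode l m a x) = x := by
  obtain ⟨R, hR⟩ := exists_abs_proj_le hl0.le hl1 m a
  refine mem_codeSet_and_proj_eq_of_decomposition hl0.le hl1
    (by rintro _ ⟨ω, hω, rfl⟩; exact hR ω hω) (mapsTo_tailPoint hl0 hl1) (fun z hz => ?_)
    (fun z _ => ?_) hx
  · obtain ⟨ω, hω, -, h0⟩ := exists_code_firstLetter hz
    exact h0 ▸ hω 0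
  · rw [tailPoint, mul_div_cancel₀ _ hl0.ne']
    ring

lemma canonCode_le (hl0 : 0 < l) (hl1 : l < 1) (p : ℕ) :
    ∀ ω ∈ codeSet m, (∀ q < p, ω q = canonCode l m a (proj l a ω) q) →
      canonCode l m a (proj l a ω) p ≤ ω p := by
  induction p with
  | zero => exact fun ω hω _ => firstLetter_le hω
  | succ p ih =>
    intro ω hω hagree
    have hshift := proj_shift_eq_tailPoint hl0 hl1 hω (hagree 0 (by omega))
    have := ih _ (shift_mem_codeSet hω) fun q hq => by
      rw [hshift]
      exact hagree (q + 1) (by omega)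
    rwa [hshift] at this

end Canonical

section Overlaps

variable {l : ℝ} {m : ℕ} {a : ℕ → ℝ} {ω : ℕ → ℕ} {x : ℝ}

/-- The length of `[a (x - 1), a (x - 1) + l] ∩ [a x, a x + l]` when `a (x - 1) ≤ a x`. -/
noncomputable def overlapLength (l : ℝ) (a : ℕ → ℝ) (x : ℕ) : ℝ := max (a (x - 1) + l - a x) 0

lemma overlap_eq_of_overlapLength_eq {x : ℕ} {c : ℝ} (h : overlapLength l a x = c)
    (hc : 0 < c) : a (x - 1) + l - a x = c := by
  rcases max_cases (a (x - 1) + l - a x) 0 with ⟨hmax, -⟩ | ⟨hmax, -⟩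
  · rwa [overlapLength, hmax] at h
  · rw [overlapLength, hmax] at h
    linarith

/-- If the overlap at `x` is `l ^ (K + 1)`, the block `x 1^K` codes the same points as
`(x - 1) m^K`, so a lexicographically least code never contains it. -/
def AvoidsOverlaps (l : ℝ) (a : ℕ → ℝ) (ω : ℕ → ℕ) : Prop :=
  ∀ p K, 2 ≤ ω p → overlapLength l a (ω p) = l ^ (K + 1) → ∃ s < K, ω (p + 1 + s) ≠ 1

lemma AvoidsOverlaps.shift (h : AvoidsOverlaps l a ω) :
    AvoidsOverlaps l a (fun j => ω (j + 1)) := by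
  intro p K h2 hov
  obtain ⟨s, hs, hne⟩ := h (p + 1) K h2 hov
  exact ⟨s, hs, by rwa [show p + 1 + 1 + s = p + 1 + s + 1 by omega] at hne⟩

lemma AvoidsOverlaps.of_comp {b : ℕ → ℝ} {ρ : ℕ → ℕ} (hρ1 : ρ 1 = 1)
    (hρ : ∀ x ∈ Icc 2 m, 2 ≤ ρ x ∧ overlapLength l b (ρ x) = overlapLength l a x)
    (hω : ω ∈ codeSet m) (h : AvoidsOverlaps l b (ρ ∘ ω)) : AvoidsOverlaps l a ω := by
  intro p K h2 hov
  have hx : ω p ∈ Icc 2 m := ⟨h2, (hω p).2⟩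
  obtain ⟨s, hs, hne⟩ := h p K (hρ _ hx).1 (by rw [Function.comp_apply, (hρ _ hx).2, hov])
  exact ⟨s, hs, fun h1 => hne (by rw [Function.comp_apply, h1, hρ1])⟩

lemma exists_code_lt_of_overlap (hl0 : 0 < l) (hl1 : l < 1) (ha1 : a 1 = 0) (ham : a m = 1 - l)
    (hω : ω ∈ codeSet m) {p K : ℕ} (h2 : 2 ≤ ω p)
    (hov : a (ω p - 1) + l - a (ω p) = l ^ (K + 1)) (hones : ∀ s < K, ω (p + 1 + s) = 1) :
    ∃ ω' ∈ codeSet m, proj l a ω' = proj l a ω ∧ (∀ q < p, ω' q = ω q) ∧ ω' p < ω p := by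
  set ω' : ℕ → ℕ := fun j => if j = p then ω p - 1 else if p < j ∧ j ≤ p + K then m else ω j
  have hm : 2 ≤ m := h2.trans (hω p).2
  have hω' : ω' ∈ codeSet m := by
    intro j
    simp only [ω']
    split_ifs
    · exact ⟨by omega, by have := (hω p).2; omega⟩
    · exact ⟨by omega, le_rfl⟩
    · exact hω j
  have hout : ∀ j ∉ Finset.Ico p (p + K + 1), ω j = ω' j := by
    intro j hj
    rw [Finset.mem_Ico] at hj
    simp only [ω']
    rw [if_neg (by omega), if_neg (by omega)]
  have hblock : ∀ j ∈ Finset.Ico (p + 1) (p + K + 1),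
      (a (ω j) - a (ω' j)) * l ^ j = -((1 - l) * l ^ j) := by
    intro j hj
    rw [Finset.mem_Ico] at hj
    have hj1 : ω j = 1 := by
      simpa [show p + 1 + (j - p - 1) = j by omega] using hones (j - p - 1) (by omega)
    simp only [ω']
    rw [if_neg (by omega), if_pos ⟨by omega, by omega⟩, hj1, ha1, ham]
    ring
  refine ⟨ω', hω', ?_, fun q hq => ?_, by simp only [ω', if_pos rfl]; omega⟩
  · rw [← sub_eq_zero, ← neg_eq_zero, neg_sub, proj_sub_proj_eq_sum hl0.le hl1 hω hω' hout,
      Finset.sum_eq_sum_Ico_succ_bot (by omega), Finset.sum_congr rfl hblock,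
      Finset.sum_neg_distrib, ← Finset.mul_sum, geom_sum_Ico hl1.ne (by omega)]
    simp only [ω', if_pos rfl]
    rw [show a (ω p) = a (ω p - 1) + l - l ^ (K + 1) by linarith]
    field_simp [sub_ne_zero.2 hl1.ne]
    ring
  · simp only [ω']
    rw [if_neg (by omega), if_neg (by omega)]

lemma avoidsOverlaps_canonCode (hl0 : 0 < l) (hl1 : l < 1) (ha1 : a 1 = 0) (ham : a m = 1 - l)
    (hx : x ∈ proj l a '' codeSet m) : AvoidsOverlaps l a (canonCode l m a x) := by
  obtain ⟨hcode, hproj⟩ := canonCode_spec hl0 hl1 hx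
  intro p K h2 hov
  by_contra! hones
  obtain ⟨ω', hω', hproj', hagree, hlt⟩ := exists_code_lt_of_overlap hl0 hl1 ha1 ham hcode h2
    (overlap_eq_of_overlapLength_eq hov (by positivity)) hones
  have := canonCode_le hl0 hl1 p ω' hω' fun q hq => by rw [hproj', hproj]; exact hagree q hq
  rw [hproj', hproj] at this
  omega

end Overlaps

/-- Class `𝔸` with condition (III) holding at the left end, in the form the proof works with. -/
structure ClassALeft (l : ℝ) (m n : ℕ) (k : ℕ → ℕ) (a : ℕ → ℝ) : Prop where
  map_one : a 1 = 0
  map_last : a m = 1 - l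
  strictMonoOn : StrictMonoOn a (Icc 1 m)
  gap_or_overlap : ∀ i ∈ Icc 1 (m - 1),
    l < a (i + 1) - a i ∨ ∃ ℓ ∈ Icc 1 n, a i + l - a (i + 1) = l ^ k ℓ
  lt_map_two : l < a 2

namespace ClassALeft

variable {l : ℝ} {m n : ℕ} {k : ℕ → ℕ} {a : ℕ → ℝ} {ω τ : ℕ → ℕ}

lemma mapsTo (ht : ClassALeft l m n k a) (hm : 1 ≤ m) : MapsTo a (Icc 1 m) (Icc 0 (1 - l)) :=
  fun _ hi => ⟨ht.map_one ▸ ht.strictMonoOn.monotoneOn ⟨le_rfl, hm⟩ hi hi.1,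
    ht.map_last ▸ ht.strictMonoOn.monotoneOn hi ⟨hm, le_rfl⟩ hi.2⟩

lemma lt_succ (ht : ClassALeft l m n k a) {i : ℕ} (hi : i ∈ Icc 1 (m - 1)) :
    a i < a (i + 1) := by
  obtain ⟨hi1, hi2⟩ := hi
  exact ht.strictMonoOn ⟨hi1, by omega⟩ ⟨by omega, by omega⟩ (by omega)

lemma two_le_of_overlap (ht : ClassALeft l m n k a) (hl0 : 0 < l) (hl1 : l < 1) {i e : ℕ}
    (hi : i ∈ Icc 1 (m - 1)) (h : a i + l - a (i + 1) = l ^ e) : 2 ≤ e := by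
  have : l ^ e < l ^ 1 := by linarith [ht.lt_succ hi]
  exact (pow_lt_pow_iff_right_of_lt_one₀ hl0 hl1).1 this

lemma sub_le_sub_succ (ht : ClassALeft l m n k a) (hl0 : 0 < l) (hl1 : l < 1) {i : ℕ}
    (hi : i ∈ Icc 1 (m - 1)) : l - l ^ 2 ≤ a (i + 1) - a i := by
  rcases ht.gap_or_overlap i hi with hgap | ⟨ℓ, -, hov⟩
  · nlinarith
  · linarith [pow_le_pow_of_le_one hl0.le hl1.le (ht.two_le_of_overlap hl0 hl1 hi hov)]

lemma two_mul_lt_one (ht : ClassALeft l m n k a) (hm : 2 ≤ m) : 2 * l < 1 := by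
  have := ht.strictMonoOn.monotoneOn ⟨by omega, hm⟩ ⟨by omega, le_rfl⟩ hm
  linarith [ht.lt_map_two, ht.map_last]

lemma le_proj_sub_proj_of_add_two_le (ht : ClassALeft l m n k a) (hl0 : 0 < l) (hl1 : l < 1)
    (hω : ω ∈ codeSet m) (hτ : τ ∈ codeSet m) (h : ω 0 + 2 ≤ τ 0) :
    l * (1 - 2 * l) ≤ proj l a τ - proj l a ω := by
  have hm : 1 ≤ m := (hω 0).1.trans (hω 0).2
  have h1 := ht.sub_le_sub_succ hl0 hl1 (i := ω 0) ⟨(hω 0).1, by have := (hτ 0).2; omega⟩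
  have h2 := ht.sub_le_sub_succ hl0 hl1 (i := ω 0 + 1) ⟨by omega, by have := (hτ 0).2; omega⟩
  have h3 := ht.strictMonoOn.monotoneOn ⟨by omega, h.trans (hτ 0).2⟩ (hτ 0) h
  have h4 := proj_sub_proj_ge hl0.le hl1 (ht.mapsTo hm) hω hτ
  have h5 :=
    mul_nonneg hl0.le (proj_mem_Icc hl0.le hl1 (ht.mapsTo hm) (shift_mem_codeSet hτ)).1
  nlinarith

/-- If the pieces `i` and `i + 1` overlap by `l ^ (K + 1)`, a code starting with `i + 1` that
avoids overlaps has a letter `≥ 2` among its next `K`, so its point lies at least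
`l ^ K * (a 2 - l)` to the right of every point coded from `i`. -/
lemma exists_pos_le_proj_sub_proj_of_succ (ht : ClassALeft l m n k a) (hl0 : 0 < l)
    (hl1 : l < 1) {i : ℕ} (hi : i ∈ Icc 1 (m - 1)) :
    ∃ c > 0, ∀ ω ∈ codeSet m, ∀ τ ∈ codeSet m, AvoidsOverlaps l a τ → ω 0 = i →
      τ 0 = i + 1 → c ≤ proj l a τ - proj l a ω := by
  have hm : 1 ≤ m := by have := hi.1; have := hi.2; omega
  have ha := ht.mapsTo hm
  rcases ht.gap_or_overlap i hi with hgap | ⟨ℓ, -, hov⟩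
  · refine ⟨a (i + 1) - a i - l, by linarith, fun ω hω τ hτ _ hω0 hτ0 => ?_⟩
    have h1 := proj_sub_proj_ge hl0.le hl1 ha hω hτ
    have h2 := mul_nonneg hl0.le (proj_mem_Icc hl0.le hl1 ha (shift_mem_codeSet hτ)).1
    rw [hω0, hτ0] at h1
    linarith
  obtain ⟨K, hK⟩ : ∃ K, k ℓ = K + 1 :=
    ⟨k ℓ - 1, by have := ht.two_le_of_overlap hl0 hl1 hi hov; omega⟩
  rw [hK] at hov
  refine ⟨l ^ K * (a 2 - l), by have := ht.lt_map_two; positivity,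
    fun ω hω τ hτ havoid hω0 hτ0 => ?_⟩
  have hlen : overlapLength l a (τ 0) = l ^ (K + 1) := by
    rw [overlapLength, hτ0, Nat.add_sub_cancel, hov, max_eq_left (by positivity)]
  have hτm := (hτ 0).2
  obtain ⟨s, hs, hne⟩ := havoid 0 K (by have := hi.1; omega) hlen
  rw [zero_add] at hne
  have h2 : a 2 ≤ a (τ (1 + s)) :=
    ht.strictMonoOn.monotoneOn ⟨by omega, by have := hi.1; omega⟩ (hτ _)
      (by have := (hτ (1 + s)).1; omega)
  have hshift : a 2 * l ^ K ≤ l * proj l a (fun j => τ (j + 1)) :=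
    calc a 2 * l ^ K ≤ a 2 * (l * l ^ s) := by
          rw [← pow_succ']
          exact mul_le_mul_of_nonneg_left (pow_le_pow_of_le_one hl0.le hl1.le (by omega))
            (ha ⟨by omega, by have := hi.1; omega⟩).1
      _ ≤ a (τ (1 + s)) * (l * l ^ s) := mul_le_mul_of_nonneg_right h2 (by positivity)
      _ = l * (a (τ (s + 1)) * l ^ s) := by rw [add_comm 1 s]; ring
      _ ≤ l * proj l a (fun j => τ (j + 1)) :=
          mul_le_mul_of_nonneg_left
            (mul_pow_le_proj hl0.le hl1 ha (shift_mem_codeSet hτ) s) hl0.le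
  have h5 := proj_sub_proj_ge hl0.le hl1 ha hω hτ
  rw [hω0, hτ0, show a (i + 1) = a i + l - l ^ (K + 1) by linarith, pow_succ] at h5
  linarith

lemma exists_pos_le_proj_sub_proj (ht : ClassALeft l m n k a) (hl0 : 0 < l) (hl1 : l < 1)
    (hm : 2 ≤ m) :
    ∃ c > 0, ∀ ω ∈ codeSet m, ∀ τ ∈ codeSet m, AvoidsOverlaps l a τ → ω 0 < τ 0 →
      c ≤ proj l a τ - proj l a ω := by
  obtain ⟨c, hc, hsucc⟩ := exists_pos_forall_of_finite (finite_Icc 1 (m - 1))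
    (P := fun i c => ∀ ω ∈ codeSet m, ∀ τ ∈ codeSet m, AvoidsOverlaps l a τ → ω 0 = i →
      τ 0 = i + 1 → c ≤ proj l a τ - proj l a ω)
    (fun _ _ _ hc' hP ω hω τ hτ hav h0 h1 => hc'.trans (hP ω hω τ hτ hav h0 h1))
    fun _ hi => ht.exists_pos_le_proj_sub_proj_of_succ hl0 hl1 hi
  have hfar : 0 < l * (1 - 2 * l) := mul_pos hl0 (by linarith [ht.two_mul_lt_one hm])
  refine ⟨min c (l * (1 - 2 * l)), lt_min hc hfar, fun ω hω τ hτ hav hlt => ?_⟩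
  rcases (show τ 0 = ω 0 + 1 ∨ ω 0 + 2 ≤ τ 0 by omega) with h | h
  · have hi : ω 0 ∈ Icc 1 (m - 1) := ⟨(hω 0).1, by have := (hτ 0).2; omega⟩
    exact (min_le_left _ _).trans (hsucc _ hi ω hω τ hτ hav rfl h)
  · exact (min_le_right _ _).trans (ht.le_proj_sub_proj_of_add_two_le hl0 hl1 hω hτ h)

lemma exists_separation (ht : ClassALeft l m n k a) (hl0 : 0 < l) (hl1 : l < 1) (hm : 2 ≤ m) :
    ∃ c > 0, ∀ p, ∀ ω ∈ codeSet m, ∀ τ ∈ codeSet m, AvoidsOverlaps l a ω →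
      AvoidsOverlaps l a τ → (∀ q < p, ω q = τ q) → ω p ≠ τ p →
        c * l ^ p ≤ |proj l a ω - proj l a τ| := by
  obtain ⟨c, hc, hfirst⟩ := ht.exists_pos_le_proj_sub_proj hl0 hl1 hm
  refine ⟨c, hc, fun p => ?_⟩
  induction p with
  | zero =>
    intro ω hω τ hτ hωa hτa _ hne
    rw [pow_zero, mul_one]
    rcases Nat.lt_or_gt_of_ne hne with h | h
    · exact (hfirst ω hω τ hτ hτa h).trans (abs_sub_comm (proj l a ω) _ ▸ le_abs_self _)
    · exact (hfirst τ hτ ω hω hωa h).trans (le_abs_self _)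
  | succ p ih =>
    intro ω hω τ hτ hωa hτa hagree hne
    have hsh := ih _ (shift_mem_codeSet hω) _ (shift_mem_codeSet hτ) hωa.shift hτa.shift
      (fun q hq => hagree (q + 1) (by omega)) hne
    rw [proj_eq_add hl0.le hl1 hω, proj_eq_add hl0.le hl1 hτ, hagree 0 (by omega),
      add_sub_add_left_eq_sub, ← mul_sub, abs_mul, abs_of_pos hl0, pow_succ', mul_left_comm]
    exact mul_le_mul_of_nonneg_left hsh hl0.le

lemma canonCode_proj (ht : ClassALeft l m n k a) (hl0 : 0 < l) (hl1 : l < 1) (hm : 2 ≤ m)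
    (hω : ω ∈ codeSet m) (hωa : AvoidsOverlaps l a ω) : canonCode l m a (proj l a ω) = ω := by
  have hx : proj l a ω ∈ proj l a '' codeSet m := ⟨ω, hω, rfl⟩
  obtain ⟨hcode, hproj⟩ := canonCode_spec hl0 hl1 hx
  by_contra hne
  obtain ⟨p, hagree, hp⟩ := exists_first_ne hne
  obtain ⟨c, hc, hsep⟩ := ht.exists_separation hl0 hl1 hm
  have := hsep p _ hcode ω hω (avoidsOverlaps_canonCode hl0 hl1 ht.map_one ht.map_last hx) hωa
    hagree hp
  rw [hproj, sub_self, abs_zero] at this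
  exact (mul_pos hc (pow_pos hl0 p)).not_ge this

lemma exists_overlapLength_eq (ht : ClassALeft l m n k a) (hl0 : 0 < l) {x : ℕ}
    (hx : x ∈ Icc 2 m) (h : overlapLength l a x ≠ 0) :
    ∃ ℓ ∈ Icc 1 n, overlapLength l a x = l ^ k ℓ := by
  have hx1 : x - 1 + 1 = x := by have := hx.1; omega
  rcases ht.gap_or_overlap (x - 1) ⟨by have := hx.1; omega, by have := hx.2; omega⟩ with
    hgap | ⟨ℓ, hℓ, hov⟩
  · rw [hx1] at hgap
    exact absurd (max_eq_right (by linarith)) h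
  · rw [hx1] at hov
    exact ⟨ℓ, hℓ, by rw [overlapLength, hov, max_eq_left (by positivity)]⟩

end ClassALeft

section Relabeling

variable {l : ℝ} {m n : ℕ} {k : ℕ → ℕ} {a b : ℕ → ℝ}

lemma ncard_gammaSet_eq_card_overlapLength (hl0 : 0 < l) (ℓ : ℕ) :
    (gammaSet l m k a ℓ).ncard = #{x ∈ Finset.Icc 2 m | overlapLength l a x = l ^ k ℓ} := by
  have himage : (({x ∈ Finset.Icc 2 m | overlapLength l a x = l ^ k ℓ} : Finset ℕ) : Set ℕ) =
      (· + 1) '' gammaSet l m k a ℓ := by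
    ext x
    simp only [Finset.coe_filter, Finset.mem_Icc, mem_ofPred_eq, mem_image, gammaSet, mem_Icc]
    constructor
    · rintro ⟨hx, hov⟩
      refine ⟨x - 1, ⟨⟨by omega, by omega⟩, ?_⟩, by omega⟩
      rw [Nat.sub_add_cancel (by omega)]
      exact overlap_eq_of_overlapLength_eq hov (by positivity)
    · rintro ⟨i, ⟨hi, hov⟩, rfl⟩
      refine ⟨by omega, ?_⟩
      rw [overlapLength, Nat.add_sub_cancel, hov, max_eq_left (by positivity)]
  rw [← Set.ncard_coe_finset, himage, Set.ncard_image_of_injective _ (add_left_injective 1)]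

lemma exists_perm_overlapLength (hl0 : 0 < l)
    (hta : ClassALeft l m n k a) (htb : ClassALeft l m n k b)
    (hγ : ∀ ℓ ∈ Icc 1 n, (gammaSet l m k a ℓ).ncard = (gammaSet l m k b ℓ).ncard) :
    ∃ ρ : Equiv.Perm ℕ, (∀ x ∈ Icc 2 m, ρ x ∈ Icc 2 m ∧
      overlapLength l b (ρ x) = overlapLength l a x) ∧ ∀ x ∉ Icc 2 m, ρ x = x := by
  classical
  have hfiber : ∀ c ≠ 0, #{x ∈ Finset.Icc 2 m | overlapLength l a x = c} =
      #{x ∈ Finset.Icc 2 m | overlapLength l b x = c} := by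
    intro c hc
    by_cases hpow : ∃ ℓ ∈ Icc 1 n, c = l ^ k ℓ
    · obtain ⟨ℓ, hℓ, rfl⟩ := hpow
      rw [← ncard_gammaSet_eq_card_overlapLength hl0, ← ncard_gammaSet_eq_card_overlapLength hl0,
        hγ ℓ hℓ]
    · have hempty : ∀ {a'}, ClassALeft l m n k a' →
          ({x ∈ Finset.Icc 2 m | overlapLength l a' x = c} : Finset ℕ) = ∅ := by
        refine fun ht => Finset.filter_eq_empty_iff.2 fun x hx hov => hpow ?_
        obtain ⟨ℓ, hℓ, h⟩ := ht.exists_overlapLength_eq hl0 (Finset.mem_Icc.1 hx) (hov ▸ hc)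
        exact ⟨ℓ, hℓ, hov ▸ h⟩
      rw [hempty hta, hempty htb]
  obtain ⟨ρ, hρ, hfix⟩ := exists_perm_of_card_filter_eq _ _ _ 0 hfiber
  exact ⟨ρ, fun x hx => by simpa using hρ x (by simpa using hx),
    fun x hx => hfix x (by simpa using hx)⟩

end Relabeling

section Dimension

variable {l : ℝ} {m n : ℕ} {k : ℕ → ℕ} {a b : ℕ → ℝ}

lemma lipschitzOnWith_proj_comp_canonCode (hl0 : 0 < l) (hl1 : l < 1) (hm : 2 ≤ m)
    (hta : ClassALeft l m n k a) (hb : MapsTo b (Icc 1 m) (Icc 0 (1 - l))) {ρ : ℕ → ℕ}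
    (hρ : MapsTo ρ (Icc 1 m) (Icc 1 m)) :
    ∃ K, LipschitzOnWith K (fun x => proj l b (ρ ∘ canonCode l m a x))
      (proj l a '' codeSet m) := by
  obtain ⟨c, hc, hsep⟩ := hta.exists_separation hl0 hl1 hm
  refine ⟨_, LipschitzOnWith.of_dist_le' (K := c⁻¹) fun x hx y hy => ?_⟩
  obtain ⟨hωx, hx'⟩ := canonCode_spec hl0 hl1 hx
  obtain ⟨hωy, hy'⟩ := canonCode_spec hl0 hl1 hy
  by_cases heq : canonCode l m a x = canonCode l m a y
  · rw [← hx', ← hy', heq, dist_self, dist_self, mul_zero]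
  obtain ⟨p, hagree, hp⟩ := exists_first_ne heq
  have hupper : dist (proj l b (ρ ∘ canonCode l m a x)) (proj l b (ρ ∘ canonCode l m a y)) ≤
      l ^ p :=
    abs_proj_sub_proj_le hl0.le hl1 hb p _ (fun j => hρ (hωx j)) _ (fun j => hρ (hωy j))
      fun q hq => congrArg ρ (hagree q hq)
  have hlower : c * l ^ p ≤ dist x y := by
    have := hsep p _ hωx _ hωy (avoidsOverlaps_canonCode hl0 hl1 hta.map_one hta.map_last hx)
      (avoidsOverlaps_canonCode hl0 hl1 hta.map_one hta.map_last hy) hagree hp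
    rwa [hx', hy'] at this
  calc _ ≤ l ^ p := hupper
    _ = c⁻¹ * (c * l ^ p) := by field_simp
    _ ≤ c⁻¹ * dist x y := mul_le_mul_of_nonneg_left hlower (by positivity)

lemma subset_image_proj_comp_canonCode (hl0 : 0 < l) (hl1 : l < 1) (hm : 2 ≤ m)
    (hta : ClassALeft l m n k a) (htb : ClassALeft l m n k b) {ρ : Equiv.Perm ℕ}
    (hρ : ∀ x ∈ Icc 2 m, ρ x ∈ Icc 2 m ∧ overlapLength l b (ρ x) = overlapLength l a x)
    (hfix : ∀ x ∉ Icc 2 m, ρ x = x) :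
    proj l b '' codeSet m ⊆
      (fun x => proj l b (ρ ∘ canonCode l m a x)) '' (proj l a '' codeSet m) := by
  intro y hy
  obtain ⟨hτ, hy'⟩ := canonCode_spec hl0 hl1 hy
  have hτa := avoidsOverlaps_canonCode hl0 hl1 htb.map_one htb.map_last hy
  set τ := canonCode l m b y
  have hω : ρ.symm ∘ τ ∈ codeSet m := by
    intro j
    show ρ.symm (τ j) ∈ Icc 1 m
    by_cases h : ρ.symm (τ j) ∈ Icc 2 m
    · exact ⟨by have := h.1; omega, h.2⟩
    · have := hfix _ h
      rw [Equiv.apply_symm_apply] at this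
      rw [← this]
      exact hτ j
  have hρω : ρ ∘ (ρ.symm ∘ τ) = τ := by ext j; simp
  have hωa : AvoidsOverlaps l a (ρ.symm ∘ τ) :=
    AvoidsOverlaps.of_comp (hfix 1 (by simp)) (fun x hx => ⟨(hρ x hx).1.1, (hρ x hx).2⟩) hω
      (by rwa [hρω])
  refine ⟨proj l a (ρ.symm ∘ τ), ⟨_, hω, rfl⟩, ?_⟩
  simp only [hta.canonCode_proj hl0 hl1 hm hω hωa, hρω, hy']

lemma dimH_le_of_classALeft (hl0 : 0 < l) (hl1 : l < 1) (hm : 2 ≤ m)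
    (hta : ClassALeft l m n k a) (htb : ClassALeft l m n k b)
    (hγ : ∀ ℓ ∈ Icc 1 n, (gammaSet l m k a ℓ).ncard = (gammaSet l m k b ℓ).ncard) :
    dimH (proj l b '' codeSet m) ≤ dimH (proj l a '' codeSet m) := by
  obtain ⟨ρ, hρ, hfix⟩ := exists_perm_overlapLength hl0 hta htb hγ
  have hρm : MapsTo ρ (Icc 1 m) (Icc 1 m) := fun x hx => by
    by_cases h : x ∈ Icc 2 m
    · exact ⟨by have := (hρ x h).1.1; omega, (hρ x h).1.2⟩
    · rwa [hfix x h]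
  obtain ⟨K, hK⟩ :=
    lipschitzOnWith_proj_comp_canonCode hl0 hl1 hm hta (htb.mapsTo (by omega)) hρm
  calc dimH (proj l b '' codeSet m) ≤ dimH _ :=
        dimH_mono (subset_image_proj_comp_canonCode hl0 hl1 hm hta htb hρ hfix)
    _ ≤ dimH (proj l a '' codeSet m) := hK.dimH_image_le

lemma dimH_eq_of_classALeft {Ka Kb : Set ℝ} (hl0 : 0 < l) (hl1 : l < 1) (hm : 2 ≤ m)
    (hta : ClassALeft l m n k a) (htb : ClassALeft l m n k b)
    (hγ : ∀ ℓ ∈ Icc 1 n, (gammaSet l m k a ℓ).ncard = (gammaSet l m k b ℓ).ncard)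
    (hKa : IsIFSAttractor l m a Ka) (hKb : IsIFSAttractor l m b Kb) : dimH Ka = dimH Kb := by
  rw [hKa.eq_image_proj hl0.le hl1, hKb.eq_image_proj hl0.le hl1]
  exact le_antisymm (dimH_le_of_classALeft hl0 hl1 hm htb hta fun ℓ hℓ => (hγ ℓ hℓ).symm)
    (dimH_le_of_classALeft hl0 hl1 hm hta htb hγ)

end Dimension

section Reflection

variable {l : ℝ} {m n : ℕ} {k : ℕ → ℕ} {a : ℕ → ℝ} {K : Set ℝ}

/-- Conjugating the maps `x ↦ l * x + a i` by `x ↦ 1 - x` and reversing their order. -/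
def reflect (l : ℝ) (m : ℕ) (a : ℕ → ℝ) : ℕ → ℝ := fun i => 1 - l - a (m + 1 - i)

lemma add_lt_of_Icc_inter_Icc_eq_empty {c d : ℝ} (hcd : c ≤ d)
    (h : Icc c (c + l) ∩ Icc d (d + l) = ∅) : c + l < d := by
  rw [Icc_inter_Icc, Icc_eq_empty_iff, max_eq_right hcd, min_eq_left (by linarith)] at h
  exact lt_of_not_ge h

lemma _root_.MemClassA.gap_or_overlap (hA : MemClassA l m n k a) :
    ∀ i ∈ Icc 1 (m - 1),
      l < a (i + 1) - a i ∨ ∃ ℓ ∈ Icc 1 n, a i + l - a (i + 1) = l ^ k ℓ := by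
  obtain ⟨⟨-, -, hmono⟩, -, hpair, -⟩ := hA
  rintro i ⟨hi1, hi2⟩
  have hi : i ∈ Icc 1 m := ⟨hi1, by omega⟩
  have hi' : i + 1 ∈ Icc 1 m := ⟨by omega, by omega⟩
  by_cases hemp : Icc (a i) (a i + l) ∩ Icc (a (i + 1)) (a (i + 1) + l) = ∅
  · left
    linarith [add_lt_of_Icc_inter_Icc_eq_empty (hmono hi hi' (by omega)).le hemp]
  · exact Or.inr (hpair i (i + 1) hi hi' (by omega) (nonempty_iff_ne_empty.2 hemp))

lemma classALeft_reflect (hm : 2 ≤ m) (ha1 : a 1 = 0) (ham : a m = 1 - l)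
    (hmono : StrictMonoOn a (Icc 1 m))
    (hadj : ∀ i ∈ Icc 1 (m - 1),
      l < a (i + 1) - a i ∨ ∃ ℓ ∈ Icc 1 n, a i + l - a (i + 1) = l ^ k ℓ)
    (hlast : a (m - 1) + l < a m) : ClassALeft l m n k (reflect l m a) where
  map_one := by simp [reflect, ham]
  map_last := by simp [reflect, ha1]
  strictMonoOn := by
    rintro x ⟨hx1, hxm⟩ y ⟨hy1, hym⟩ hxy
    have := hmono (show m + 1 - y ∈ Icc 1 m from ⟨by omega, by omega⟩)
      (show m + 1 - x ∈ Icc 1 m from ⟨by omega, by omega⟩) (by omega)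
    simp only [reflect]
    linarith
  gap_or_overlap := by
    rintro i ⟨hi1, hi2⟩
    have e1 : m + 1 - i = m - i + 1 := by omega
    have e2 : m + 1 - (i + 1) = m - i := by omega
    simp only [reflect, e1, e2]
    rcases hadj (m - i) ⟨by omega, by omega⟩ with hgap | ⟨ℓ, hℓ, hov⟩
    · left; linarith
    · right; exact ⟨ℓ, hℓ, by linarith⟩
  lt_map_two := by
    simp only [reflect, show m + 1 - 2 = m - 1 by omega]
    linarith

lemma _root_.MemClassA.classALeft_or (hm : 2 ≤ m) (hA : MemClassA l m n k a) :
    ClassALeft l m n k a ∨ ClassALeft l m n k (reflect l m a) := by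
  have hadj := hA.gap_or_overlap
  obtain ⟨⟨ha1, ham, hmono⟩, -, -, hfirst | hlast⟩ := hA
  · refine Or.inl ⟨ha1, ham, hmono, hadj, ?_⟩
    have := add_lt_of_Icc_inter_Icc_eq_empty
      (hmono.monotoneOn ⟨le_rfl, by omega⟩ ⟨by omega, hm⟩ (by omega)) (hfirst 2 (by omega) hm)
    linarith
  · refine Or.inr (classALeft_reflect hm ha1 ham hmono hadj ?_)
    have h := hlast (m - 1) (by omega) (by omega)
    rw [inter_comm] at h
    exact add_lt_of_Icc_inter_Icc_eq_empty
      (hmono.monotoneOn ⟨by omega, by omega⟩ ⟨by omega, le_rfl⟩ (by omega)) h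

lemma ncard_gammaSet_reflect (ℓ : ℕ) :
    (gammaSet l m k (reflect l m a) ℓ).ncard = (gammaSet l m k a ℓ).ncard := by
  have himage : gammaSet l m k (reflect l m a) ℓ = (m - ·) '' gammaSet l m k a ℓ := by
    ext i
    simp only [gammaSet, reflect, mem_ofPred_eq, mem_Icc, mem_image]
    constructor
    · rintro ⟨⟨hi1, hi2⟩, hov⟩
      refine ⟨m - i, ⟨⟨by omega, by omega⟩, ?_⟩, by omega⟩
      rw [show m + 1 - i = m - i + 1 by omega, show m + 1 - (i + 1) = m - i by omega] at hov
      linarith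
    · rintro ⟨j, ⟨⟨hj1, hj2⟩, hov⟩, rfl⟩
      refine ⟨⟨by omega, by omega⟩, ?_⟩
      rw [show m + 1 - (m - j) = j + 1 by omega, show m + 1 - (m - j + 1) = j by omega]
      linarith
  rw [himage]
  refine InjOn.ncard_image fun i hi j hj hij => ?_
  have := hi.1.2
  have := hj.1.2
  omega

lemma IsIFSAttractor.reflect (hK : IsIFSAttractor l m a K) :
    IsIFSAttractor l m (reflect l m a) ((fun x => 1 - x) '' K) where
  nonempty := hK.nonempty.image _
  isCompact := hK.isCompact.image (continuous_const.sub continuous_id)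
  eq_biUnion := by
    ext z
    simp only [mem_iUnion, mem_image, mem_Icc]
    constructor
    · rintro ⟨w, hw, rfl⟩
      rw [hK.eq_biUnion] at hw
      simp only [mem_iUnion, mem_image, mem_Icc] at hw
      obtain ⟨i, hi, v, hv, rfl⟩ := hw
      refine ⟨m + 1 - i, ⟨by omega, by omega⟩, 1 - v, ⟨v, hv, rfl⟩, ?_⟩
      simp only [HomogeneousIFS.reflect, show m + 1 - (m + 1 - i) = i by omega]
      ring
    · rintro ⟨i, hi, _, ⟨v, hv, rfl⟩, rfl⟩
      have hmem : l * v + a (m + 1 - i) ∈ K := by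
        rw [hK.eq_biUnion]
        exact mem_biUnion (x := m + 1 - i) ⟨by omega, by omega⟩ ⟨v, hv, rfl⟩
      exact ⟨_, hmem, by simp only [HomogeneousIFS.reflect]; ring⟩

lemma _root_.MemClassA.exists_classALeft (hm : 2 ≤ m) (hA : MemClassA l m n k a)
    (hK : IsIFSAttractor l m a K) :
    ∃ a' K', ClassALeft l m n k a' ∧ IsIFSAttractor l m a' K' ∧ dimH K' = dimH K ∧
      ∀ ℓ, (gammaSet l m k a' ℓ).ncard = (gammaSet l m k a ℓ).ncard := by
  rcases hA.classALeft_or hm with ht | ht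
  · exact ⟨a, K, ht, hK, rfl, fun _ => rfl⟩
  · exact ⟨_, _, ht, hK.reflect, (IsometryEquiv.subLeft (1 : ℝ)).isometry.dimH_image K,
      ncard_gammaSet_reflect⟩

end Reflection

end HomogeneousIFS

theorem dimH_corollary_general
    (l : ℝ) (hl : 0 < l ∧ l < 1) (m n : ℕ) (hm : 3 ≤ m)
    (k : ℕ → ℕ)
    (a b : ℕ → ℝ) (haA : MemClassA l m n k a) (hbA : MemClassA l m n k b)
    (hγ : ∀ ℓ ∈ Set.Icc 1 n,
      (gammaSet l m k a ℓ).ncard = (gammaSet l m k b ℓ).ncard)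
    (Ka Kb : Set ℝ)
    (hKane : Ka.Nonempty) (hKac : IsCompact Ka)
    (hKa : Ka = ⋃ i ∈ Set.Icc 1 m, (fun x => l * x + a i) '' Ka)
    (hKbne : Kb.Nonempty) (hKbc : IsCompact Kb)
    (hKb : Kb = ⋃ i ∈ Set.Icc 1 m, (fun x => l * x + b i) '' Kb) :
    dimH Ka = dimH Kb := by
  obtain ⟨hl0, hl1⟩ := hl
  obtain ⟨a', Ka', ha', hKa', hdima, hγa⟩ :=
    haA.exists_classALeft (by omega) ⟨hKane, hKac, hKa⟩
  obtain ⟨b', Kb', hb', hKb', hdimb, hγb⟩ :=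
    hbA.exists_classALeft (by omega) ⟨hKbne, hKbc, hKb⟩
  rw [← hdima, ← hdimb]
  exact HomogeneousIFS.dimH_eq_of_classALeft hl0 hl1 (by omega) ha' hb'
    (fun ℓ hℓ => by rw [hγa, hγb, hγ ℓ hℓ]) hKa' hKb'

theorem dimH_corollary
    (l : ℝ) (hl : 0 < l ∧ l < 1) (m n : ℕ) (hm : 3 ≤ m) (hn : 1 ≤ n)
    (k : ℕ → ℕ) (hkanti : StrictAntiOn k (Set.Icc 1 n)) (hk2 : 2 ≤ k n)
    (a b : ℕ → ℝ) (haA : MemClassA l m n k a) (hbA : MemClassA l m n k b)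
    (hγ : ∀ ℓ ∈ Set.Icc 1 n,
      (gammaSet l m k a ℓ).ncard = (gammaSet l m k b ℓ).ncard)
    (Ka Kb : Set ℝ)
    (hKane : Ka.Nonempty) (hKac : IsCompact Ka)
    (hKa : Ka = ⋃ i ∈ Set.Icc 1 m, (fun x => l * x + a i) '' Ka)
    (hKbne : Kb.Nonempty) (hKbc : IsCompact Kb)
    (hKb : Kb = ⋃ i ∈ Set.Icc 1 m, (fun x => l * x + b i) '' Kb) :
    dimH Ka = dimH Kb :=
  dimH_corollary_general l hl m n hm k a b haA hbA hγ Ka Kb hKane hKac hKa hKbne hKbc hKb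
end
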